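/- arXiv:2408.06489 — 5 statements merged into one kernel-verified Lean document; each statement's English description precedes it below -/
import Mathlib

section
/- Every orchard network is forest-based. That is, if N is a network that can be reduced to a reduced DAG by a sequence of cherry-picking operations, then there exists A' ⊆ A(N) such that F = (V(N), A') is a forest whose leaf set equals L(N) and every arc in A(N) \ A' has its two endpoints in different trees of F. -/
/-!
Finite directed acyclic graphs (DAGs) whose vertex set may shrink under
cherry-picking operations are represented by a pair consisting of a vertex set
`s : Set U` inside an ambient type `U` and an arc relation `A : U → U → Prop`
supported on `s`.
-/

namespace Paper

variable {U : Type*}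

/-- `(s, A)` is a finite DAG: the vertex set is finite, arcs join vertices of
`s`, and there is no directed cycle. -/
def IsDag (s : Set U) (A : U → U → Prop) : Prop :=
  s.Finite ∧ (∀ ⦃u v⦄, A u v → u ∈ s ∧ v ∈ s) ∧ ∀ v, ¬ Relation.TransGen A v v

/-- A leaf of `(s, A)`: a vertex of outdegree 0. -/
def DLeaf (s : Set U) (A : U → U → Prop) (v : U) : Prop :=
  v ∈ s ∧ ∀ w, ¬ A v w

/-- A subdivision vertex of `(s, A)`: indegree 1 and outdegree 1. -/
def IsSubdiv (s : Set U) (A : U → U → Prop) (v : U) : Prop :=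
  v ∈ s ∧ (∃! w, A w v) ∧ (∃! w, A v w)

/-- A reticulation of `(s, A)`: a non-leaf vertex of indegree ≥ 2. -/
def Retic (s : Set U) (A : U → U → Prop) (v : U) : Prop :=
  v ∈ s ∧ (∃ w, A v w) ∧ ∃ u w, u ≠ w ∧ A u v ∧ A w v

/-- `SuppressIf s A w s' A'` holds when `(s', A')` is obtained from `(s, A)` by
suppressing the vertex `w` in case it is a subdivision vertex (deleting it and
adding an arc from its unique in-neighbor to its unique out-neighbor), and by
doing nothing otherwise. -/
def SuppressIf (s : Set U) (A : U → U → Prop) (w : U)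
    (s' : Set U) (A' : U → U → Prop) : Prop :=
  (¬ IsSubdiv s A w ∧ s' = s ∧ A' = A) ∨
    (IsSubdiv s A w ∧ ∃ z o, A z w ∧ A w o ∧ s' = s \ {w} ∧
      A' = fun a b => (A a b ∧ a ≠ w ∧ b ≠ w) ∨ (a = z ∧ b = o))

/-- A standard cherry: a pair of distinct leaves with a common in-neighbor. -/
def StandardCherry (s : Set U) (A : U → U → Prop) (x y : U) : Prop :=
  x ≠ y ∧ DLeaf s A x ∧ DLeaf s A y ∧ ∃ w, A w x ∧ A w y

/-- A reticulated cherry: a pair `(x, y)` of distinct leaves whose respective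
in-neighbors `x', y'` are such that `y'` is a reticulation and `(x', y')` is an
arc. -/
def ReticCherry (s : Set U) (A : U → U → Prop) (x y : U) : Prop :=
  x ≠ y ∧ DLeaf s A x ∧ DLeaf s A y ∧
    ∃ x' y', A x' x ∧ A y' y ∧ Retic s A y' ∧ A x' y'

/-- The cherry-picking operation on a standard cherry `(x, y)`: remove `y` and
its incident arc, and suppress the possible resulting subdivision vertex. -/
def StandardPickAt (s : Set U) (A : U → U → Prop) (x y : U)
    (s' : Set U) (A' : U → U → Prop) : Prop :=
  StandardCherry s A x y ∧
    ∃ w, A w x ∧ A w y ∧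
      SuppressIf (s \ {y}) (fun a b => A a b ∧ a ≠ y ∧ b ≠ y) w s' A'

/-- The cherry-picking operation on a reticulated cherry `(x, y)` with
in-neighbors `x', y'`: remove the arc `(x', y')` and suppress the possible
resulting subdivision vertices. -/
def ReticPickAt (s : Set U) (A : U → U → Prop) (x y : U)
    (s' : Set U) (A' : U → U → Prop) : Prop :=
  ReticCherry s A x y ∧
    ∃ x' y', A x' x ∧ A y' y ∧ Retic s A y' ∧ A x' y' ∧
      ∃ s₁ A₁, SuppressIf s (fun a b => A a b ∧ ¬(a = x' ∧ b = y')) x' s₁ A₁ ∧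
        SuppressIf s₁ A₁ y' s' A'

/-- One cherry-picking operation, on some cherry. -/
def CherryStep (N N' : Set U × (U → U → Prop)) : Prop :=
  ∃ x y, StandardPickAt N.1 N.2 x y N'.1 N'.2 ∨ ReticPickAt N.1 N.2 x y N'.1 N'.2

/-- Reachability in the underlying undirected graph (being in the same
connected component). -/
def UReach (A : U → U → Prop) : U → U → Prop :=
  Relation.ReflTransGen fun a b => A a b ∨ A b a

/-- `(s, A)` is reduced: each connected component contains exactly one arc,
whose endpoints are a root and a leaf. -/
def Reduced (s : Set U) (A : U → U → Prop) : Prop :=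
  ∀ v ∈ s, (∃! e : U × U, A e.1 e.2 ∧ UReach A v e.1) ∧
    ∀ a b, A a b → UReach A v a → (∀ w, ¬ A w a) ∧ ∀ w, ¬ A b w

/-- `(s, A)` is reducible: some sequence of cherry-picking operations
transforms it into a reduced DAG. -/
def Reducible (s : Set U) (A : U → U → Prop) : Prop :=
  ∃ N' : Set U × (U → U → Prop),
    Relation.ReflTransGen CherryStep (s, A) N' ∧ Reduced N'.1 N'.2

/-- A directed path of `(s, A)`: a nonempty list of pairwise distinct vertices
of `s`, consecutive ones joined by arcs. -/
def IsPathOn (s : Set U) (A : U → U → Prop) (p : List U) : Prop :=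
  p ≠ [] ∧ p.Nodup ∧ p.Chain' A ∧ ∀ v ∈ p, v ∈ s

/-- An induced directed path of `(s, A)`: the only arcs among its vertices are
the consecutive arcs of the path. -/
def IsInducedPathOn (s : Set U) (A : U → U → Prop) (p : List U) : Prop :=
  IsPathOn s A p ∧
    ∀ i j : Fin p.length, A (p.get i) (p.get j) → (j : ℕ) = (i : ℕ) + 1

/-- A leaf induced path partition of `(s, A)`: a collection of vertex-disjoint
induced directed paths whose vertex sets partition `s`, each path ending at a
leaf. -/
def IsLeafIPPOn (s : Set U) (A : U → U → Prop) (P : Set (List U)) : Prop :=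
  (∀ p ∈ P, IsInducedPathOn s A p) ∧
  (∀ v ∈ s, ∃! p, p ∈ P ∧ v ∈ p) ∧
  ∀ p ∈ P, ∃ x, p.getLast? = some x ∧ DLeaf s A x

/-- `(s, A)` is a network: it has at least two vertices, is connected (in the
underlying undirected graph), every root has outdegree at least 2, every leaf
has indegree 1, every reticulation has outdegree 1, and there is no
subdivision vertex. -/
def IsNetwork (s : Set U) (A : U → U → Prop) : Prop :=
  s.Nontrivial ∧
  (∀ u ∈ s, ∀ v ∈ s, UReach A u v) ∧
  (∀ v ∈ s, (∀ w, ¬ A w v) → ∃ a b, a ≠ b ∧ A v a ∧ A v b) ∧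
  (∀ v, DLeaf s A v → ∃! w, A w v) ∧
  (∀ v, Retic s A v → ∃! w, A v w) ∧
  ∀ v, ¬ IsSubdiv s A v

/-- `(s, A)` is forest-based: there is a subrelation `F ⊆ A` that is a spanning
forest (acyclic, every vertex of indegree at most 1; equivalently, every
connected component is a tree) whose leaf set equals the leaf set of `(s, A)`,
and every arc of `A` not in `F` has its two endpoints in different trees
(connected components) of `F`. -/
def ForestBasedOn (s : Set U) (A : U → U → Prop) : Prop :=
  ∃ F : U → U → Prop,
    (∀ ⦃u v⦄, F u v → A u v) ∧
    (∀ v, ¬ Relation.TransGen F v v) ∧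
    (∀ ⦃u w v⦄, F u v → F w v → u = w) ∧
    (∀ v ∈ s, (∀ w, ¬ F v w) ↔ DLeaf s A v) ∧
    ∀ u v, A u v → ¬ F u v → ¬ UReach F u v



/-- `u` and `v` occur consecutively (in this order) in the list `p`. -/
def Consec (p : List U) (u v : U) : Prop := ∃ l₁ l₂, p = l₁ ++ u :: v :: l₂

lemma Consec.mem_left {p : List U} {u v : U} (h : Consec p u v) : u ∈ p := by
  obtain ⟨l₁, l₂, rfl⟩ := h; simp

lemma Consec.mem_right {p : List U} {u v : U} (h : Consec p u v) : v ∈ p := by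
  obtain ⟨l₁, l₂, rfl⟩ := h; simp

lemma Consec.chain' {R : U → U → Prop} {p : List U} {u v : U}
    (hc : p.Chain' R) (h : Consec p u v) : R u v := by
  obtain ⟨l₁, l₂, rfl⟩ := h
  rcases (List.isChain_append.1 hc) with ⟨-, h2, -⟩
  exact (List.isChain_cons_cons.1 h2).1

lemma Consec.append_right {p : List U} {u v : U} (h : Consec p u v) (r : List U) :
    Consec (p ++ r) u v := by
  obtain ⟨l₁, l₂, rfl⟩ := h; exact ⟨l₁, l₂ ++ r, by simp⟩

lemma Consec.append_left {p : List U} {u v : U} (h : Consec p u v) (r : List U) :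
    Consec (r ++ p) u v := by
  obtain ⟨l₁, l₂, rfl⟩ := h; exact ⟨r ++ l₁, l₂, by simp⟩

/-- In a `Nodup` list, the two decompositions at a common element agree. -/
lemma nodup_split_unique {p : List U} (hp : p.Nodup) {a : U} :
    ∀ {l₁ l₂ m₁ m₂ : List U}, p = l₁ ++ a :: l₂ → p = m₁ ++ a :: m₂ →
      l₁ = m₁ ∧ l₂ = m₂ := by
  induction p with
  | nil => intro l₁ l₂ m₁ m₂ h1 _; exact absurd h1.symm (by simp)
  | cons b q ih =>
    intro l₁ l₂ m₁ m₂ h1 h2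
    rcases l₁ with _ | ⟨c, l₁⟩ <;> rcases m₁ with _ | ⟨d, m₁⟩
    · simp_all
    · -- p = a :: l₂ and p = d :: (m₁ ++ a :: m₂)
      simp only [List.nil_append, List.cons_append, List.cons.injEq] at h1 h2
      exfalso
      have : a ∈ q := by rw [h2.2, ← h1.1]; simp
      exact (List.nodup_cons.1 hp).1 (h1.1 ▸ this)
    · simp only [List.nil_append, List.cons_append, List.cons.injEq] at h1 h2
      exfalso
      have : a ∈ q := by rw [h1.2, ← h2.1]; simp
      exact (List.nodup_cons.1 hp).1 (h2.1 ▸ this)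
    · simp only [List.cons_append, List.cons.injEq] at h1 h2
      obtain ⟨h3, h4⟩ := ih (List.nodup_cons.1 hp).2 h1.2 h2.2
      exact ⟨by rw [← h1.1, ← h2.1, h3], h4⟩

lemma consec_pred_unique {p : List U} (hp : p.Nodup) {u v w : U}
    (h1 : Consec p u v) (h2 : Consec p w v) : u = w := by
  obtain ⟨l₁, l₂, e1⟩ := h1
  obtain ⟨m₁, m₂, e2⟩ := h2
  have e1' : p = (l₁ ++ [u]) ++ v :: l₂ := by simp [e1]
  have e2' : p = (m₁ ++ [w]) ++ v :: m₂ := by simp [e2]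
  have := (nodup_split_unique hp e1' e2').1
  have h := congrArg (fun l => l.getLast?) this
  simpa using h

lemma consec_prefix {e d : List U} (hp : (e ++ d).Nodup) {u v : U}
    (h : Consec (e ++ d) u v) (hv : v ∈ e) : Consec e u v := by
  obtain ⟨l₁, l₂, heq⟩ := h
  obtain ⟨e₁, e₂, rfl⟩ := List.append_of_mem hv
  have h1 : (e₁ ++ v :: e₂) ++ d = (l₁ ++ [u]) ++ v :: l₂ := by simpa using heq
  have h2 : (e₁ ++ v :: e₂) ++ d = e₁ ++ v :: (e₂ ++ d) := by simp
  obtain ⟨h3, h4⟩ := nodup_split_unique hp h1 h2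
  -- h3 : l₁ ++ [u] = e₁
  exact ⟨l₁, e₂, by rw [← h3]; simp⟩


lemma consec_suffix {e d : List U} (hp : (e ++ d).Nodup) {u v : U}
    (h : Consec (e ++ d) u v) (hu : u ∈ d) : Consec d u v := by
  obtain ⟨l₁, l₂, heq⟩ := h
  obtain ⟨d₁, d₂, rfl⟩ := List.append_of_mem hu
  have h1 : e ++ (d₁ ++ u :: d₂) = l₁ ++ u :: (v :: l₂) := by simpa using heq
  have h2 : e ++ (d₁ ++ u :: d₂) = (e ++ d₁) ++ u :: d₂ := by simp
  obtain ⟨h3, h4⟩ := nodup_split_unique (by simpa using hp) h1 h2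
  -- h4 : v :: l₂ = d₂
  exact ⟨d₁, l₂, by rw [← h4]⟩

lemma mem_consec_of_ne_last {p : List U} {v x : U} (hv : v ∈ p)
    (hx : p.getLast? = some x) (hne : v ≠ x) : ∃ u, Consec p v u := by
  induction p with
  | nil => simp at hv
  | cons a q ih =>
    rcases q with _ | ⟨b, q⟩
    · simp only [List.mem_singleton] at hv
      simp only [List.getLast?_singleton, Option.some.injEq] at hx
      exact absurd (hv.trans hx) hne
    · rcases List.mem_cons.1 hv with rfl | hv
      · exact ⟨b, [], q, by simp⟩
      · obtain ⟨u, l₁, l₂, hl⟩ := ih hv (by rwa [List.getLast?_cons_cons] at hx)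
        exact ⟨u, a :: l₁, l₂, by simp [hl]⟩

lemma chain'_transGen {R : U → U → Prop} {l₁ l₂ : List U} {a b : U}
    (hc : (l₁ ++ a :: l₂).Chain' R) (hb : b ∈ l₂) :
    Relation.TransGen R a b := by
  rcases (List.isChain_append.1 hc) with ⟨-, h2, -⟩
  clear hc
  induction l₂ generalizing a with
  | nil => simp at hb
  | cons c q ih =>
    have hac : R a c := (List.isChain_cons_cons.1 h2).1
    rcases List.mem_cons.1 hb with rfl | hb
    · exact Relation.TransGen.single hac
    · exact (ih hb (List.isChain_cons_cons.1 h2).2).head hac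

lemma mem_of_getLast?_eq {p : List U} {x : U} (hx : p.getLast? = some x) :
    x ∈ p := by
  rcases p.eq_nil_or_concat with rfl | ⟨q, b, rfl⟩
  · simp at hx
  · have : b = x := by simpa using hx
    simp [← this]

/-- A `Nodup` list: get-based inducedness is equivalent to `Consec`-based. -/
lemma induced_get_iff_consec {A : U → U → Prop} {p : List U} (hp : p.Nodup) :
    (∀ i j : Fin p.length, A (p.get i) (p.get j) → (j : ℕ) = (i : ℕ) + 1) ↔
      (∀ u v, A u v → u ∈ p → v ∈ p → Consec p u v) := by
  constructor
  · intro h u v hA hu hv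
    obtain ⟨i, rfl⟩ := List.mem_iff_get.1 hu
    obtain ⟨j, rfl⟩ := List.mem_iff_get.1 hv
    have hij := h i j hA
    have hi1 : (i : ℕ) + 1 < p.length := hij ▸ j.2
    refine ⟨p.take i, p.drop ((i : ℕ) + 2), ?_⟩
    have e1 : p.drop (i : ℕ) = p.get i :: p.drop ((i : ℕ) + 1) := by
      rw [List.drop_eq_getElem_cons i.2]; rfl
    have hgj : p.get j = p[(i : ℕ) + 1]'hi1 := by
      rw [List.get_eq_getElem]
      congr 1
    have e2 : p.drop ((i : ℕ) + 1) = p.get j :: p.drop ((i : ℕ) + 2) := by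
      rw [List.drop_eq_getElem_cons hi1, hgj]
    rw [← e2, ← e1, List.take_append_drop]
  · intro h i j hA
    obtain ⟨l₁, l₂, heq⟩ := h _ _ hA (p.get_mem _) (p.get_mem _)
    have hlen1 : (l₁.length : ℕ) < p.length := by rw [heq]; simp
    have hlen2 : l₁.length + 1 < p.length := by rw [heq]; simp
    have g1 : p.get ⟨l₁.length, hlen1⟩ = p.get i := by
      rw [List.get_eq_getElem, List.getElem_of_eq heq, List.getElem_append_right (le_refl _)]
      simp
    have g2 : p.get ⟨l₁.length + 1, hlen2⟩ = p.get j := by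
      rw [List.get_eq_getElem, List.getElem_of_eq heq,
        List.getElem_append_right (Nat.le_succ _)]
      simp
    have hinj := List.nodup_iff_injective_get.1 hp
    have e1 : (⟨l₁.length, hlen1⟩ : Fin p.length) = i := hinj g1
    have e2 : (⟨l₁.length + 1, hlen2⟩ : Fin p.length) = j := hinj g2
    rw [← Fin.val_eq_val] at e1 e2
    simp at e1 e2
    omega


/-! ### The invariant carried along a cherry-picking sequence -/

/-- The invariant: arcs are supported on `s`, there are no directed cycles,
and every leaf has a unique in-neighbour. -/
def Good (s : Set U) (A : U → U → Prop) : Prop :=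
  (∀ ⦃u v⦄, A u v → u ∈ s ∧ v ∈ s) ∧ (∀ v, ¬ Relation.TransGen A v v) ∧
    ∀ v, DLeaf s A v → ∃! w, A w v

def HasLIPP (s : Set U) (A : U → U → Prop) : Prop := ∃ P, IsLeafIPPOn s A P

lemma Good.ne_of_arc {s : Set U} {A : U → U → Prop} (hG : Good s A) {u v : U}
    (h : A u v) : u ≠ v := by
  rintro rfl; exact hG.2.1 u (Relation.TransGen.single h)

lemma Good.asymm {s : Set U} {A : U → U → Prop} (hG : Good s A) {u v : U}
    (h : A u v) (h' : A v u) : False :=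
  hG.2.1 u ((Relation.TransGen.single h).tail h')

lemma transGen_le_of_arc {R S : U → U → Prop}
    (h : ∀ a b, R a b → Relation.TransGen S a b) {a b : U}
    (hab : Relation.TransGen R a b) : Relation.TransGen S a b := by
  induction hab with
  | single hr => exact h _ _ hr
  | tail _ hr ih => exact ih.trans (h _ _ hr)

lemma isInducedPathOn_iff {s : Set U} {A : U → U → Prop} {p : List U} :
    IsInducedPathOn s A p ↔
      (p ≠ [] ∧ p.Nodup ∧ p.Chain' A ∧ ∀ v ∈ p, v ∈ s) ∧
        ∀ u v, A u v → u ∈ p → v ∈ p → Consec p u v := by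
  constructor
  · rintro ⟨⟨h1, h2, h3, h4⟩, h5⟩
    exact ⟨⟨h1, h2, h3, h4⟩, (induced_get_iff_consec h2).1 h5⟩
  · rintro ⟨⟨h1, h2, h3, h4⟩, h5⟩
    exact ⟨⟨h1, h2, h3, h4⟩, (induced_get_iff_consec h2).2 h5⟩

/-! ### Preservation of the invariant by the atomic operations -/

lemma good_leafdel {s : Set U} {A : U → U → Prop} (hG : Good s A) {y w x : U}
    (hy : DLeaf s A y) (hwy : A w y) (hwx : A w x) (hxy : x ≠ y) :
    Good (s \ {y}) (fun a b => A a b ∧ a ≠ y ∧ b ≠ y) := by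
  refine ⟨?_, ?_, ?_⟩
  · rintro u v ⟨h, hu, hv⟩
    exact ⟨⟨(hG.1 h).1, hu⟩, ⟨(hG.1 h).2, hv⟩⟩
  · intro v hv
    exact hG.2.1 v (transGen_le_of_arc
      (fun a b h => Relation.TransGen.single h.1) hv)
  · intro v hv
    have hvy : v ≠ y := fun h => hv.1.2 (by simp [h])
    have hvA : DLeaf s A v := by
      refine ⟨hv.1.1, fun u hu => ?_⟩
      by_cases huy : u = y
      · have hvw : v = w := by
          obtain ⟨w', -, hw'⟩ := hG.2.2 y hy
          rw [hw' v (huy ▸ hu), hw' w hwy]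
        refine hv.2 x ?_
        rw [hvw]
        exact ⟨hwx, hG.ne_of_arc hwy, hxy⟩
      · exact hv.2 u ⟨hu, hvy, huy⟩
    obtain ⟨u, hu, huniq⟩ := hG.2.2 v hvA
    refine ⟨u, ⟨hu, fun h => hy.2 v (h ▸ hu), hvy⟩, ?_⟩
    rintro q ⟨hq, -, -⟩
    exact huniq q hq

lemma good_suppress {s : Set U} {A : U → U → Prop} (hG : Good s A) {w z o : U}
    (hw : IsSubdiv s A w) (hz : A z w) (ho : A w o) :
    Good (s \ {w})
      (fun a b => (A a b ∧ a ≠ w ∧ b ≠ w) ∨ (a = z ∧ b = o)) := by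
  have hzw : z ≠ w := hG.ne_of_arc hz
  have how : o ≠ w := (hG.ne_of_arc ho).symm
  have hzo : z ≠ o := by rintro rfl; exact hG.asymm ho hz
  have hins : ∀ u, A u w → u = z := by
    intro u hu
    obtain ⟨u', -, hu'⟩ := hw.2.1
    rw [hu' u hu, hu' z hz]
  have houts : ∀ u, A w u → u = o := by
    intro u hu
    obtain ⟨u', -, hu'⟩ := hw.2.2
    rw [hu' u hu, hu' o ho]
  refine ⟨?_, ?_, ?_⟩
  · rintro u v (⟨h, hu, hv⟩ | ⟨rfl, rfl⟩)
    · exact ⟨⟨(hG.1 h).1, hu⟩, ⟨(hG.1 h).2, hv⟩⟩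
    · exact ⟨⟨(hG.1 hz).1, hzw⟩, ⟨(hG.1 ho).2, how⟩⟩
  · intro v hv
    refine hG.2.1 v (transGen_le_of_arc (fun a b h => ?_) hv)
    rcases h with ⟨h, -, -⟩ | ⟨rfl, rfl⟩
    · exact Relation.TransGen.single h
    · exact (Relation.TransGen.single hz).tail ho
  · intro v hv
    have hvw : v ≠ w := hv.1.2
    have hvA : DLeaf s A v := by
      refine ⟨hv.1.1, fun u hu => ?_⟩
      by_cases huw : u = w
      · subst huw
        have : v = z := hins v hu
        exact hv.2 o (Or.inr ⟨this, rfl⟩)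
      · exact hv.2 u (Or.inl ⟨hu, hvw, huw⟩)
    obtain ⟨u, hu, huniq⟩ := hG.2.2 v hvA
    by_cases huw : u = w
    · subst huw
      have hvo : v = o := houts v hu
      subst hvo
      refine ⟨z, Or.inr ⟨rfl, rfl⟩, ?_⟩
      rintro q (⟨hq, hq2, -⟩ | ⟨rfl, -⟩)
      · exact absurd (huniq q hq) hq2
      · rfl
    · have hvo : v ≠ o := by rintro rfl; exact huw (huniq w ho).symm
      refine ⟨u, Or.inl ⟨hu, huw, hvw⟩, ?_⟩
      rintro q (⟨hq, -, -⟩ | ⟨rfl, rfl⟩)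
      · exact huniq q hq
      · exact absurd rfl hvo

lemma good_arcdel {s : Set U} {A : U → U → Prop} (hG : Good s A) {m n l b : U}
    (hmn : A m n) (hml : A m l) (hln : l ≠ n) (hnb : A n b) :
    Good s (fun a b => A a b ∧ ¬(a = m ∧ b = n)) := by
  have hmn' : m ≠ n := hG.ne_of_arc hmn
  refine ⟨?_, ?_, ?_⟩
  · rintro u v ⟨h, -⟩; exact hG.1 h
  · intro v hv
    exact hG.2.1 v (transGen_le_of_arc
      (fun a b h => Relation.TransGen.single h.1) hv)
  · intro v hv
    have hvA : DLeaf s A v := by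
      refine ⟨hv.1, fun u hu => ?_⟩
      by_cases h : v = m ∧ u = n
      · exact hv.2 l ⟨h.1 ▸ hml, by rintro ⟨-, rfl⟩; exact hln rfl⟩
      · exact hv.2 u ⟨hu, h⟩
    have hvn : v ≠ n := by
      rintro rfl
      exact hv.2 b ⟨hnb, by rintro ⟨rfl, -⟩; exact hmn' rfl⟩
    obtain ⟨u, hu, huniq⟩ := hG.2.2 v hvA
    refine ⟨u, ⟨hu, by rintro ⟨-, rfl⟩; exact hvn rfl⟩, ?_⟩
    rintro q ⟨hq, -⟩
    exact huniq q hq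


/-! ### Transport of leaf induced path partitions -/

/-- In a leaf induced path partition, any vertex of a path that is a leaf is
the last vertex, and the path is `[o]` or ends with an arc `z → o`. -/
lemma path_end_structure {s : Set U} {A : U → U → Prop} {P : Set (List U)}
    (hP : IsLeafIPPOn s A P) {p : List U} (hp : p ∈ P) {o : U} (ho : o ∈ p)
    (holeaf : ∀ v, ¬ A o v) :
    p = [o] ∨ ∃ q z, p = q ++ [z, o] ∧ A z o := by
  obtain ⟨⟨hne, hnd, hch, hmem⟩, hind⟩ := isInducedPathOn_iff.1 (hP.1 p hp)
  obtain ⟨xx, hlast, hxleaf⟩ := hP.2.2 p hp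
  have hxo : xx = o := by
    by_contra hne'
    obtain ⟨u, hcons⟩ := mem_consec_of_ne_last ho hlast (Ne.symm hne')
    exact holeaf u (hcons.chain' hch)
  subst hxo
  have hxx : p.getLast hne = xx := by
    rw [List.getLast?_eq_getLast hne] at hlast
    exact (Option.some.injEq _ _ ▸ hlast : _)
  have hsplit : p.dropLast ++ [xx] = p := by
    rw [← hxx]; exact List.dropLast_append_getLast hne
  rcases p.dropLast.eq_nil_or_concat with hnil | ⟨q, z, hqz⟩
  · left; rw [← hsplit, hnil]; rfl
  · right
    refine ⟨q, z, by rw [← hsplit, hqz]; simp, ?_⟩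
    have : Consec p z xx := ⟨q, [], by rw [← hsplit, hqz]; simp⟩
    exact this.chain' hch

lemma lipp_leafdel {s : Set U} {A : U → U → Prop} (hG : Good s A) {y w x : U}
    (hy : DLeaf s A y) (hwy : A w y) (hwx : A w x) (hxy : x ≠ y)
    (h : HasLIPP (s \ {y}) (fun a b => A a b ∧ a ≠ y ∧ b ≠ y)) :
    HasLIPP s A := by
  obtain ⟨P, hP1, hP2, hP3⟩ := h
  have hwny : w ≠ y := hG.ne_of_arc hwy
  have hmemP : ∀ p ∈ P, ∀ v ∈ p, v ∈ s ∧ v ≠ y := by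
    intro p hp v hv
    have := (isInducedPathOn_iff.1 (hP1 p hp)).1.2.2.2 v hv
    exact ⟨this.1, fun h' => this.2 (by simp [h'])⟩
  refine ⟨insert [y] P, ?_, ?_, ?_⟩
  · rintro p (rfl | hp)
    · refine isInducedPathOn_iff.2 ⟨⟨by simp, by simp, List.isChain_singleton _, ?_⟩, ?_⟩
      · intro v hv; rw [List.mem_singleton] at hv; exact hv ▸ hy.1
      · intro u v hA hu hv
        rw [List.mem_singleton] at hu hv
        exact absurd (hu ▸ hA) (hy.2 v)
    · obtain ⟨⟨hne, hnd, hch, hmem⟩, hind⟩ := isInducedPathOn_iff.1 (hP1 p hp)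
      refine isInducedPathOn_iff.2 ⟨⟨hne, hnd, hch.imp fun a b h' => h'.1,
        fun v hv => ((hmemP p hp) v hv).1⟩, ?_⟩
      intro u v hA hu hv
      exact hind u v ⟨hA, (hmemP p hp u hu).2, (hmemP p hp v hv).2⟩ hu hv
  · intro v hv
    by_cases hvy : v = y
    · subst hvy
      refine ⟨[v], ⟨Set.mem_insert _ _, by simp⟩, ?_⟩
      rintro q ⟨(rfl | hq), hvq⟩
      · rfl
      · exact absurd rfl (hmemP q hq v hvq).2
    · obtain ⟨p, ⟨hp, hvp⟩, huniq⟩ := hP2 v ⟨hv, hvy⟩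
      refine ⟨p, ⟨Set.mem_insert_of_mem _ hp, hvp⟩, ?_⟩
      rintro q ⟨(rfl | hq), hvq⟩
      · rw [List.mem_singleton] at hvq; exact absurd hvq hvy
      · exact huniq q ⟨hq, hvq⟩
  · rintro p (rfl | hp)
    · exact ⟨y, by simp, hy⟩
    · obtain ⟨x₀, hlast, hx₀⟩ := hP3 p hp
      refine ⟨x₀, hlast, hx₀.1.1, fun v hv => ?_⟩
      by_cases hvy : v = y
      · have hx₀w : x₀ = w := by
          obtain ⟨w', -, hw'⟩ := hG.2.2 y hy
          rw [hw' x₀ (hvy ▸ hv), hw' w hwy]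
        exact hx₀.2 x (by rw [hx₀w]; exact ⟨hwx, hwny, hxy⟩)
      · exact hx₀.2 v ⟨hv, fun h' => hx₀.1.2 (by simp [h']), hvy⟩

lemma chain'_of_chain' {R S : U → U → Prop} {p : List U} (hc : p.Chain' R)
    (h : ∀ u v, Consec p u v → R u v → S u v) : p.Chain' S := by
  induction p with
  | nil => exact List.isChain_nil
  | cons a t ih =>
    rcases t with _ | ⟨b, t⟩
    · exact List.isChain_singleton _
    · simp only [List.Chain', List.isChain_cons_cons] at hc ⊢
      refine ⟨h a b ⟨[], t, rfl⟩ hc.1, ih hc.2 fun u v hcons hr => ?_⟩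
      obtain ⟨l₁, l₂, hl⟩ := hcons
      exact h u v ⟨a :: l₁, l₂, by simp [hl]⟩ hr

lemma lipp_suppress {s : Set U} {A : U → U → Prop} (hG : Good s A) {w z o : U}
    (hw : IsSubdiv s A w) (hz : A z w) (ho : A w o) (hleaf : DLeaf s A o)
    (h : HasLIPP (s \ {w})
      (fun a b => (A a b ∧ a ≠ w ∧ b ≠ w) ∨ (a = z ∧ b = o))) :
    HasLIPP s A := by
  set A' : U → U → Prop :=
    fun a b => (A a b ∧ a ≠ w ∧ b ≠ w) ∨ (a = z ∧ b = o) with hA'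
  have hzw : z ≠ w := hG.ne_of_arc hz
  have how : o ≠ w := (hG.ne_of_arc ho).symm
  have hzo : z ≠ o := by rintro rfl; exact hG.asymm ho hz
  have hins : ∀ u, A u w → u = z := by
    intro u hu
    obtain ⟨u', -, hu'⟩ := hw.2.1
    rw [hu' u hu, hu' z hz]
  have houts : ∀ u, A w u → u = o := by
    intro u hu
    obtain ⟨u', -, hu'⟩ := hw.2.2
    rw [hu' u hu, hu' o ho]
  have hparo : ∀ u, A u o → u = w := by
    intro u hu
    obtain ⟨u', -, hu'⟩ := hG.2.2 o hleaf
    rw [hu' u hu, hu' w ho]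
  obtain ⟨P, hP1, hP2, hP3⟩ := h
  have hmemP : ∀ p ∈ P, ∀ v ∈ p, v ∈ s ∧ v ≠ w := by
    intro p hp v hv
    have := (isInducedPathOn_iff.1 (hP1 p hp)).1.2.2.2 v hv
    exact ⟨this.1, fun h' => this.2 (by simp [h'])⟩
  -- the path of `o`
  obtain ⟨p₀, ⟨hp₀, hop₀⟩, huq0⟩ := hP2 o ⟨hleaf.1, by simp [how]⟩
  have hp₀uniq : ∀ q ∈ P, o ∈ q → q = p₀ := fun q hq hoq => huq0 q ⟨hq, hoq⟩
  have holeaf' : ∀ v, ¬ A' o v := by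
    rintro v (⟨hA, -, -⟩ | ⟨h1, -⟩)
    · exact hleaf.2 v hA
    · exact hzo h1.symm
  -- leaf-ends of other paths are `A`-leaves
  have hends : ∀ p ∈ P, ∀ x₀, DLeaf (s \ {w}) A' x₀ → DLeaf s A x₀ := by
    intro p hp x₀ hx₀
    refine ⟨hx₀.1.1, fun v hv => ?_⟩
    by_cases hvw : v = w
    · have hxz : x₀ = z := hins x₀ (hvw ▸ hv)
      exact hx₀.2 o (Or.inr ⟨hxz, rfl⟩)
    · exact hx₀.2 v (Or.inl ⟨hv, fun h' => hx₀.1.2 (by simp [h']), hvw⟩)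
  have key : ∀ e : List U, p₀ = e ++ [o] → (e = [] ∨ ∃ q, e = q ++ [z]) →
      HasLIPP s A := by
    intro e hsplit hshape
    obtain ⟨⟨hne₀, hnd₀, hch₀, hmem₀⟩, hind₀⟩ := isInducedPathOn_iff.1 (hP1 p₀ hp₀)
    have hoe : o ∉ e := by
      rw [hsplit, List.nodup_append] at hnd₀
      exact fun h' => hnd₀.2.2 o h' o (by simp) rfl
    have hmem₀' : ∀ v ∈ p₀, v ∈ s ∧ v ≠ w := hmemP p₀ hp₀
    have hwe : w ∉ e := fun h' => (hmem₀' w (by rw [hsplit]; exact List.mem_append_left _ h')).2 rfl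
    set pnew : List U := e ++ [w, o] with hpnew
    have hmem_pnew : ∀ v, v ∈ pnew ↔ (v ∈ e ∨ v = w ∨ v = o) := by
      intro v; simp [hpnew]
    have hmem_p₀ : ∀ v, v ∈ p₀ ↔ (v ∈ e ∨ v = o) := by
      intro v; simp [hsplit]
    -- chain
    have hchA_e : e.Chain' A := by
      have : e.Chain' A' := (List.isChain_append.1 (hsplit ▸ hch₀)).1
      refine chain'_of_chain' this fun u v hcons hr => ?_
      rcases hr with ⟨hA, -, -⟩ | ⟨-, rfl⟩
      · exact hA
      · exact absurd hcons.mem_right hoe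
    have hch_pnew : pnew.Chain' A := by
      show List.IsChain A pnew
      rw [hpnew, List.isChain_append]
      refine ⟨hchA_e, by simp [List.isChain_cons_cons, List.isChain_singleton, ho], ?_⟩
      intro a ha b hb
      simp only [List.head?_cons, Option.mem_def, Option.some.injEq] at hb
      subst hb
      rcases hshape with rfl | ⟨q, rfl⟩
      · simp at ha
      · rw [List.getLast?_concat] at ha
        simp only [Option.mem_def, Option.some.injEq] at ha
        exact ha ▸ hz
    -- nodup
    have hnd_e : e.Nodup := by
      rw [hsplit, List.nodup_append] at hnd₀; exact hnd₀.1
    have hnd_pnew : pnew.Nodup := by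
      rw [hpnew, List.nodup_append]
      refine ⟨hnd_e, by simp [Ne.symm how], ?_⟩
      intro a ha b hmem' hab
      subst hab
      simp only [List.mem_cons, List.mem_singleton, List.not_mem_nil, or_false]
        at hmem'
      rcases hmem' with rfl | rfl
      · exact hwe ha
      · exact hoe ha
    -- induced
    have hind_pnew : ∀ u v, A u v → u ∈ pnew → v ∈ pnew → Consec pnew u v := by
      intro u v hA hu hv
      rw [hmem_pnew] at hu hv
      rcases hu with hu | rfl | rfl
      · rcases hv with hv | rfl | rfl
        · -- both in `e`
          have hu' : u ≠ w := fun h' => hwe (h' ▸ hu)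
          have hv' : v ≠ w := fun h' => hwe (h' ▸ hv)
          have : Consec p₀ u v := hind₀ u v (Or.inl ⟨hA, hu', hv'⟩)
            ((hmem_p₀ u).2 (Or.inl hu)) ((hmem_p₀ v).2 (Or.inl hv))
          have : Consec e u v := consec_prefix (hsplit ▸ hnd₀) (hsplit ▸ this) hv
          exact (this.append_right [w, o])
        · -- v = w : u = z, and z is the last entry of e
          have huz : u = z := hins u hA
          rcases hshape with rfl | ⟨q, rfl⟩
          · simp at hu
          · exact ⟨q, [o], by rw [hpnew, huz]; simp⟩
        · -- v = o with u ∈ e : then u = w, contradiction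
          exact absurd ((hparo u hA) ▸ hu) hwe
      · -- u = w
        have := houts v hA
        subst this
        exact ⟨e, [], by rw [hpnew]⟩
      · exact absurd hA (hleaf.2 v)
    have hpnew_induced : IsInducedPathOn s A pnew := by
      refine isInducedPathOn_iff.2 ⟨⟨by simp [hpnew], hnd_pnew, hch_pnew, ?_⟩, hind_pnew⟩
      intro v hv
      rw [hmem_pnew] at hv
      rcases hv with hv | rfl | rfl
      · exact (hmem₀' v ((hmem_p₀ v).2 (Or.inl hv))).1
      · exact hw.1
      · exact hleaf.1
    -- old paths remain induced
    have hold : ∀ p ∈ P, p ≠ p₀ → IsInducedPathOn s A p := by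
      intro p hp hpne
      obtain ⟨⟨hne, hnd, hch, hmem⟩, hind⟩ := isInducedPathOn_iff.1 (hP1 p hp)
      have hop : o ∉ p := fun h' => hpne (hp₀uniq p hp h')
      refine isInducedPathOn_iff.2 ⟨⟨hne, hnd, ?_, fun v hv => (hmemP p hp v hv).1⟩, ?_⟩
      · refine chain'_of_chain' hch fun u v hcons hr => ?_
        rcases hr with ⟨hA, -, -⟩ | ⟨-, rfl⟩
        · exact hA
        · exact absurd hcons.mem_right hop
      · intro u v hA hu hv
        exact hind u v (Or.inl ⟨hA, (hmemP p hp u hu).2, (hmemP p hp v hv).2⟩) hu hv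
    refine ⟨insert pnew (P \ {p₀}), ?_, ?_, ?_⟩
    · rintro p (rfl | ⟨hp, hpne⟩)
      · exact hpnew_induced
      · exact hold p hp hpne
    · intro v hv
      by_cases hvw : v = w
      · refine ⟨pnew, ⟨Set.mem_insert _ _, (hmem_pnew v).2 (Or.inr (Or.inl hvw))⟩, ?_⟩
        rintro q ⟨(rfl | ⟨hq, -⟩), hvq⟩
        · rfl
        · exact absurd hvw (hmemP q hq v hvq).2
      · obtain ⟨p, ⟨hp, hvp⟩, huniq⟩ := hP2 v ⟨hv, by simp [hvw]⟩
        by_cases hpp : p = p₀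
        · subst hpp
          refine ⟨pnew, ⟨Set.mem_insert _ _, ?_⟩, ?_⟩
          · rw [hmem_pnew]
            rcases (hmem_p₀ v).1 hvp with h' | h'
            · exact Or.inl h'
            · exact Or.inr (Or.inr h')
          · rintro q ⟨(rfl | ⟨hq, hqne⟩), hvq⟩
            · rfl
            · exact absurd (huniq q ⟨hq, hvq⟩) (by simpa using hqne)
        · refine ⟨p, ⟨Set.mem_insert_of_mem _ ⟨hp, by simpa using hpp⟩, hvp⟩, ?_⟩
          rintro q ⟨(rfl | ⟨hq, -⟩), hvq⟩
          · exfalso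
            rw [hmem_pnew] at hvq
            rcases hvq with h' | h' | h'
            · exact hpp (huniq p₀ ⟨hp₀, (hmem_p₀ v).2 (Or.inl h')⟩).symm
            · exact hvw h'
            · exact hpp (huniq p₀ ⟨hp₀, (hmem_p₀ v).2 (Or.inr h')⟩).symm
          · exact huniq q ⟨hq, hvq⟩
    · rintro p (rfl | ⟨hp, hpne⟩)
      · exact ⟨o, by simp [hpnew], hleaf⟩
      · obtain ⟨x₀, hlast, hx₀⟩ := hP3 p hp
        exact ⟨x₀, hlast, hends p hp x₀ hx₀⟩
  rcases path_end_structure ⟨hP1, hP2, hP3⟩ hp₀ hop₀ holeaf' with h1 | ⟨q, z', hq, hz'o⟩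
  · exact key [] (by simpa using h1) (Or.inl rfl)
  · have hz'z : z' = z := by
      rcases hz'o with ⟨hA, hz'w, -⟩ | ⟨h1, -⟩
      · exact absurd (hparo z' hA) hz'w
      · exact h1
    exact key (q ++ [z']) (by simpa using hq) (Or.inr ⟨q, by rw [hz'z]⟩)

lemma lipp_arcdel {s : Set U} {A : U → U → Prop} (hG : Good s A) {m n l b : U}
    (hmn : A m n) (hml : A m l) (hleaf : DLeaf s A l) (hnb : A n b)
    (h : HasLIPP s (fun a b => A a b ∧ ¬(a = m ∧ b = n))) : HasLIPP s A := by
  set A₀ : U → U → Prop := fun a b => A a b ∧ ¬(a = m ∧ b = n) with hA₀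
  have hmn' : m ≠ n := hG.ne_of_arc hmn
  have hln : l ≠ n := by rintro rfl; exact hleaf.2 b hnb
  have hlm : l ≠ m := (hG.ne_of_arc hml).symm
  have hparl : ∀ u, A u l → u = m := by
    intro u hu
    obtain ⟨u', -, hu'⟩ := hG.2.2 l hleaf
    rw [hu' u hu, hu' m hml]
  have hA₀ml : A₀ m l := ⟨hml, fun h' => hln h'.2⟩
  have hA₀nb : A₀ n b := ⟨hnb, fun h' => hmn' h'.1.symm⟩
  have hlleaf₀ : DLeaf s A₀ l := ⟨hleaf.1, fun v hv => hleaf.2 v hv.1⟩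
  obtain ⟨P, hP1, hP2, hP3⟩ := h
  have hmemP : ∀ p ∈ P, ∀ v ∈ p, v ∈ s := by
    intro p hp v hv
    exact (isInducedPathOn_iff.1 (hP1 p hp)).1.2.2.2 v hv
  have hends : ∀ x₀, DLeaf s A₀ x₀ → DLeaf s A x₀ := by
    intro x₀ hx₀
    refine ⟨hx₀.1, fun v hv => ?_⟩
    by_cases h' : x₀ = m ∧ v = n
    · exact hx₀.2 l (h'.1 ▸ hA₀ml)
    · exact hx₀.2 v ⟨hv, h'⟩
  obtain ⟨p, ⟨hp, hmp⟩, huniqm⟩ := hP2 m (hG.1 hml).1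
  obtain ⟨p₀nd, p₀ch⟩ : p.Nodup ∧ p.Chain' A₀ :=
    ⟨(isInducedPathOn_iff.1 (hP1 p hp)).1.2.1, (isInducedPathOn_iff.1 (hP1 p hp)).1.2.2.1⟩
  by_cases hni : n ∈ p
  case neg =>
    -- the removed arc joins two different paths: the partition still works
    refine ⟨P, ?_, hP2, ?_⟩
    · intro q hq
      obtain ⟨⟨hne, hnd, hch, hmem⟩, hind⟩ := isInducedPathOn_iff.1 (hP1 q hq)
      refine isInducedPathOn_iff.2 ⟨⟨hne, hnd, hch.imp fun a b h' => h'.1, hmem⟩, ?_⟩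
      intro u v hA hu hv
      by_cases h' : u = m ∧ v = n
      · exfalso
        have : q = p := huniqm q ⟨hq, h'.1 ▸ hu⟩
        exact hni (this ▸ h'.2 ▸ hv)
      · exact hind u v ⟨hA, h'⟩ hu hv
    · intro q hq
      obtain ⟨x₀, hlast, hx₀⟩ := hP3 q hq
      exact ⟨x₀, hlast, hends x₀ hx₀⟩
  case pos =>
    -- `n` lies on the path of `m`: split that path
    obtain ⟨pl, ⟨hpl, hlpl⟩, huniql⟩ := hP2 l hleaf.1
    -- first: the path of `l` is the singleton `[l]`
    have hpl_eq : pl = [l] := by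
      rcases path_end_structure ⟨hP1, hP2, hP3⟩ hpl hlpl hlleaf₀.2 with h1 | ⟨q', z', hq', hz'⟩
      · exact h1
      · exfalso
        have hz'm : z' = m := hparl z' hz'.1
        have hplp : pl = p := huniqm pl ⟨hpl, by rw [hq', hz'm]; simp⟩
        -- then `n` occurs strictly before `m` on this path : a directed cycle
        have hnq' : n ∈ q' := by
          have : n ∈ pl := hplp ▸ hni
          rw [hq'] at this
          rcases List.mem_append.1 this with h' | h'
          · exact h'
          · simp only [List.mem_cons, List.mem_singleton, List.not_mem_nil, or_false] at h'
            rcases h' with rfl | rfl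
            · exact absurd hz'm hmn'.symm
            · exact absurd rfl hln.symm
        obtain ⟨c₁, c₂, rfl⟩ := List.append_of_mem hnq'
        have hchpl : pl.Chain' A₀ := (isInducedPathOn_iff.1 (hP1 pl hpl)).1.2.2.1
        have hre : pl = c₁ ++ n :: (c₂ ++ [z', l]) := by rw [hq']; simp
        have hch2 : List.Chain' A₀ (c₁ ++ n :: (c₂ ++ [z', l])) := by
          rw [← hre]; exact hchpl
        have : Relation.TransGen A₀ n m := chain'_transGen hch2 (by simp [hz'm])
        exact hG.2.1 m (Relation.TransGen.head hmn
          (transGen_le_of_arc (fun a b h' => Relation.TransGen.single h'.1) this))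
    -- decompose `p` at `m`
    obtain ⟨c, d, hcd⟩ := List.append_of_mem hmp
    have hpcd : p = (c ++ [m]) ++ d := by rw [hcd]; simp
    have hnd : n ∈ d := by
      rcases List.mem_append.1 (hpcd ▸ hni) with h' | h'
      · exfalso
        rcases List.mem_append.1 h' with h'' | h''
        · -- n ∈ c : directed cycle
          obtain ⟨c₁, c₂, rfl⟩ := List.append_of_mem h''
          have hre2 : p = c₁ ++ n :: (c₂ ++ m :: d) := by rw [hcd]; simp
          have hch2 : List.Chain' A₀ (c₁ ++ n :: (c₂ ++ m :: d)) := by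
            rw [← hre2]; exact p₀ch
          have : Relation.TransGen A₀ n m := chain'_transGen hch2 (by simp)
          exact hG.2.1 m (Relation.TransGen.head hmn
            (transGen_le_of_arc (fun a b hh => Relation.TransGen.single hh.1) this))
        · exact hmn' ((by simpa using h'' : n = m)).symm
      · exact h'
    have hdne : d ≠ [] := fun h' => by simp [h'] at hnd
    have hlp : l ∉ p := by
      intro h'
      have hppl : p = pl := huniql p ⟨hp, h'⟩
      rw [hpl_eq] at hppl
      rw [hppl] at hmp
      exact hlm ((by simpa using hmp : m = l)).symm
    -- nodup facts
    have hnodup_cmd : (c ++ m :: d).Nodup := hcd ▸ p₀nd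
    have hnodup_mcd : (m :: (c ++ d)).Nodup := List.nodup_middle.1 hnodup_cmd
    have hmc : m ∉ c := fun h' => (List.nodup_cons.1 hnodup_mcd).1 (List.mem_append_left _ h')
    have hmd : m ∉ d := fun h' => (List.nodup_cons.1 hnodup_mcd).1 (List.mem_append_right _ h')
    have hdisj : ∀ a, a ∈ c → a ∈ d → False := fun a h1 h2 =>
      (List.nodup_append.1 (List.nodup_cons.1 hnodup_mcd).2).2.2 a h1 a h2 rfl
    have hmem_p : ∀ v, v ∈ p ↔ (v ∈ c ∨ v = m ∨ v ∈ d) := by intro v; simp [hcd]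
    have hpnodup' : ((c ++ [m]) ++ d).Nodup := hpcd ▸ p₀nd
    obtain ⟨⟨hne_p, -, -, hmemp_s⟩, hind_p⟩ := isInducedPathOn_iff.1 (hP1 p hp)
    set p₁ : List U := c ++ [m, l] with hp₁
    have hmem_p₁ : ∀ v, v ∈ p₁ ↔ (v ∈ c ∨ v = m ∨ v = l) := by intro v; simp [hp₁]
    have hp₁eq : p₁ = (c ++ [m]) ++ [l] := by simp [hp₁]
    -- p₁ is an induced path of (s, A)
    have hch_cm : (c ++ [m]).Chain' A₀ := by
      have := (List.isChain_append.1 (hpcd ▸ p₀ch)).1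
      exact this
    have hch_d : d.Chain' A₀ := (List.isChain_append.1 (hpcd ▸ p₀ch)).2.1
    have hind_p₁ : IsInducedPathOn s A p₁ := by
      refine isInducedPathOn_iff.2 ⟨⟨by simp [hp₁], ?_, ?_, ?_⟩, ?_⟩
      · rw [hp₁eq, List.nodup_append]
        refine ⟨(List.nodup_append.1 hpnodup').1, by simp, ?_⟩
        intro a ha b hal hab
        subst hab
        rw [List.mem_singleton] at hal
        subst hal
        rcases List.mem_append.1 ha with h' | h'
        · exact hlp ((hmem_p a).2 (Or.inl h'))
        · exact hlm (by simpa using h')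
      · show List.IsChain A p₁
        rw [hp₁eq, List.isChain_append]
        refine ⟨hch_cm.imp fun a b h' => h'.1, by simp, ?_⟩
        intro a ha b' hb'
        simp only [List.head?_cons, Option.mem_def, Option.some.injEq] at hb'
        rw [List.getLast?_concat] at ha
        simp only [Option.mem_def, Option.some.injEq] at ha hb'
        rw [← hb', ← ha]
        exact hml
      · intro v hv
        rcases (hmem_p₁ v).1 hv with h' | rfl | rfl
        · exact hmemp_s v ((hmem_p v).2 (Or.inl h'))
        · exact (hG.1 hml).1
        · exact hleaf.1
      · intro u v hA hu hv
        rw [hmem_p₁] at hu hv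
        have hunl : u ≠ l := by rintro rfl; exact absurd hA (hleaf.2 v)
        have humem : u ∈ p := by
          rcases hu with h' | h' | h'
          · exact (hmem_p u).2 (Or.inl h')
          · exact (hmem_p u).2 (Or.inr (Or.inl h'))
          · exact absurd h' hunl
        rcases hv with hv | hvm | hvl
        · -- v ∈ c
          have huv₀ : A₀ u v :=
            ⟨hA, by rintro ⟨-, h2⟩; exact hdisj v hv (by rw [h2]; exact hnd)⟩
          have hcons : Consec ((c ++ [m]) ++ d) u v := hpcd ▸ hind_p u v huv₀ humem
            ((hmem_p v).2 (Or.inl hv))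
          have := consec_prefix hpnodup' hcons (List.mem_append_left _ hv)
          exact hp₁eq ▸ this.append_right [l]
        · -- v = m
          have huv₀ : A₀ u v := ⟨hA, by rintro ⟨-, h2⟩; exact hmn' (hvm.symm.trans h2)⟩
          have hcons : Consec ((c ++ [m]) ++ d) u v := hpcd ▸ hind_p u v huv₀ humem
            ((hmem_p v).2 (Or.inr (Or.inl hvm)))
          have := consec_prefix hpnodup' hcons (by simp [hvm])
          exact hp₁eq ▸ this.append_right [l]
        · -- v = l : u = m
          have h' := hparl u (hvl ▸ hA)
          exact ⟨c, [], by rw [h', hvl]⟩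
    -- p₂ = d is an induced path of (s, A)
    have hind_p₂ : IsInducedPathOn s A d := by
      refine isInducedPathOn_iff.2 ⟨⟨hdne, (List.nodup_append.1 hpnodup').2.1,
        hch_d.imp fun a b h' => h'.1,
        fun v hv => hmemp_s v ((hmem_p v).2 (Or.inr (Or.inr hv)))⟩, ?_⟩
      intro u v hA hu hv
      have huv₀ : A₀ u v := ⟨hA, by rintro ⟨h1, -⟩; exact hmd (by rw [← h1]; exact hu)⟩
      have hcons : Consec ((c ++ [m]) ++ d) u v := hpcd ▸ hind_p u v huv₀
        ((hmem_p u).2 (Or.inr (Or.inr hu))) ((hmem_p v).2 (Or.inr (Or.inr hv)))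
      exact consec_suffix hpnodup' hcons hu
    -- old paths
    have hold : ∀ q ∈ P, q ≠ p → IsInducedPathOn s A q := by
      intro q hq hqp
      obtain ⟨⟨hne, hnd', hch, hmem⟩, hind⟩ := isInducedPathOn_iff.1 (hP1 q hq)
      refine isInducedPathOn_iff.2 ⟨⟨hne, hnd', hch.imp fun a b h' => h'.1, hmem⟩, ?_⟩
      intro u v hA hu hv
      have huv₀ : A₀ u v :=
        ⟨hA, by rintro ⟨h1, -⟩; exact hqp (huniqm q ⟨hq, by rw [← h1]; exact hu⟩)⟩
      exact hind u v huv₀ hu hv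
    -- the new partition
    refine ⟨insert p₁ (insert d ((P \ {p}) \ {[l]})), ?_, ?_, ?_⟩
    · rintro q (rfl | rfl | ⟨⟨hqP, hqp⟩, -⟩)
      · exact hind_p₁
      · exact hind_p₂
      · exact hold q hqP (by simpa using hqp)
    · intro v hv
      by_cases hvl : v = l
      · refine ⟨p₁, ⟨Set.mem_insert _ _, (hmem_p₁ v).2 (Or.inr (Or.inr hvl))⟩, ?_⟩
        rintro q ⟨(rfl | rfl | ⟨⟨hqP, -⟩, hqnl⟩), hvq⟩
        · rfl
        · exact absurd ((hmem_p l).2 (Or.inr (Or.inr (hvl ▸ hvq)))) hlp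
        · exact absurd (hpl_eq ▸ huniql q ⟨hqP, hvl ▸ hvq⟩)
            (by simpa using hqnl)
      · by_cases hvp : v ∈ p
        · obtain ⟨pv, -, huniqv⟩ := hP2 v hv
          have hqpfalse : ∀ q', q' ∈ P → q' ≠ p → v ∈ q' → False := by
            intro q' hq' hq'p hvq'
            exact hq'p ((huniqv q' ⟨hq', hvq'⟩).trans (huniqv p ⟨hp, hvp⟩).symm)
          rcases (hmem_p v).1 hvp with hvc | hvm | hvd
          · refine ⟨p₁, ⟨Set.mem_insert _ _, (hmem_p₁ v).2 (Or.inl hvc)⟩, ?_⟩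
            rintro q ⟨(rfl | rfl | ⟨⟨hqP, hqp⟩, -⟩), hvq⟩
            · rfl
            · exact (hdisj v hvc hvq).elim
            · exact (hqpfalse q hqP (by simpa using hqp) hvq).elim
          · refine ⟨p₁, ⟨Set.mem_insert _ _, (hmem_p₁ v).2 (Or.inr (Or.inl hvm))⟩, ?_⟩
            rintro q ⟨(rfl | rfl | ⟨⟨hqP, hqp⟩, -⟩), hvq⟩
            · rfl
            · exact absurd (hvm ▸ hvq) hmd
            · exact (hqpfalse q hqP (by simpa using hqp) hvq).elim
          · refine ⟨d, ⟨Set.mem_insert_of_mem _ (Set.mem_insert _ _), hvd⟩, ?_⟩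
            rintro q ⟨(rfl | rfl | ⟨⟨hqP, hqp⟩, -⟩), hvq⟩
            · exfalso
              rcases (hmem_p₁ v).1 hvq with h' | h' | h'
              · exact hdisj v h' hvd
              · exact hmd (h' ▸ hvd)
              · exact hvl h'
            · rfl
            · exact (hqpfalse q hqP (by simpa using hqp) hvq).elim
        · -- v is not on p (and v ≠ l)
          obtain ⟨pv, ⟨hpvP, hvpv⟩, huniqv⟩ := hP2 v hv
          have hpvne : pv ≠ p := fun h' => hvp (h' ▸ hvpv)
          have hpvnl : pv ≠ [l] := by
            rintro rfl
            exact hvl (by simpa using hvpv)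
          refine ⟨pv, ⟨Set.mem_insert_of_mem _ (Set.mem_insert_of_mem _
            ⟨⟨hpvP, by simpa using hpvne⟩, by simpa using hpvnl⟩), hvpv⟩, ?_⟩
          rintro q ⟨(rfl | rfl | ⟨⟨hqP, -⟩, -⟩), hvq⟩
          · exfalso
            rcases (hmem_p₁ v).1 hvq with h' | h' | h'
            · exact hvp ((hmem_p v).2 (Or.inl h'))
            · exact hvp ((hmem_p v).2 (Or.inr (Or.inl h')))
            · exact hvl h'
          · exact absurd ((hmem_p v).2 (Or.inr (Or.inr hvq))) hvp
          · exact huniqv q ⟨hqP, hvq⟩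
    · rintro q (rfl | hqd | ⟨⟨hqP, -⟩, -⟩)
      · exact ⟨l, by simp [hp₁], hleaf⟩
      · subst hqd
        obtain ⟨x₀, hlast, hx₀⟩ := hP3 p hp
        refine ⟨x₀, ?_, hends x₀ hx₀⟩
        obtain ⟨d', e, hde⟩ := (List.eq_nil_or_concat _).resolve_left hdne
        rw [List.concat_eq_append] at hde
        have h1 : p.getLast? = some e := by
          rw [hpcd, hde,
            show (c ++ [m]) ++ (d' ++ [e]) = ((c ++ [m]) ++ d') ++ [e] by simp]
          exact List.getLast?_concat
        rw [h1] at hlast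
        rw [hde, List.getLast?_concat]
        exact hlast
      · obtain ⟨x₀, hlast, hx₀⟩ := hP3 q hqP
        exact ⟨x₀, hlast, hends x₀ hx₀⟩


/-! ### Base case: reduced DAGs -/

lemma lipp_of_reduced {s : Set U} {A : U → U → Prop} (hG : Good s A)
    (hred : Reduced s A) : HasLIPP s A := by
  refine ⟨{q | ∃ a b : U, A a b ∧ q = [a, b]}, ?_, ?_, ?_⟩
  · rintro p ⟨a, c, hac, rfl⟩
    have ha : a ∈ s := (hG.1 hac).1
    obtain ⟨hain, hcout⟩ := (hred a ha).2 a c hac Relation.ReflTransGen.refl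
    refine isInducedPathOn_iff.2 ⟨⟨by simp, by simp [hG.ne_of_arc hac],
      by simp [List.Chain', List.isChain_cons_cons, List.isChain_singleton, hac], ?_⟩, ?_⟩
    · intro v hv
      rcases (by simpa using hv : v = a ∨ v = c) with rfl | rfl
      · exact ha
      · exact (hG.1 hac).2
    · intro u v hA hu hv
      have hu' : u = a ∨ u = c := by simpa using hu
      have hv' : v = a ∨ v = c := by simpa using hv
      rcases hu' with rfl | rfl
      · rcases hv' with rfl | rfl
        · exact absurd hA (hain _)
        · exact ⟨[], [], rfl⟩
      · exact absurd hA (hcout v)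
  · intro v hv
    obtain ⟨⟨e, ⟨hAe, hUe⟩, huniqe⟩, -⟩ := hred v hv
    have hmem : v = e.1 ∨ v = e.2 := by
      by_cases hstep : ∃ u, A v u ∨ A u v
      · obtain ⟨u, hu | hu⟩ := hstep
        · have := huniqe (v, u) ⟨hu, Relation.ReflTransGen.refl⟩
          exact Or.inl (by rw [← this])
        · have := huniqe (u, v)
            ⟨hu, Relation.ReflTransGen.single (Or.inr hu)⟩
          exact Or.inr (by rw [← this])
      · rcases hUe.cases_head with h' | ⟨c, hc, -⟩
        · exact absurd ⟨e.2, Or.inl (h' ▸ hAe)⟩ hstep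
        · exact absurd ⟨c, hc⟩ hstep
    refine ⟨[e.1, e.2], ⟨⟨e.1, e.2, hAe, rfl⟩, by rcases hmem with rfl | rfl <;> simp⟩, ?_⟩
    rintro q ⟨⟨a, c, hac, rfl⟩, hvq⟩
    have hvq' : v = a ∨ v = c := by simpa using hvq
    have hqe : (a, c) = e := by
      rcases hvq' with rfl | rfl
      · exact huniqe (v, c) ⟨hac, Relation.ReflTransGen.refl⟩
      · exact huniqe (a, v) ⟨hac, Relation.ReflTransGen.single (Or.inr hac)⟩
    rw [← hqe]
  · rintro p ⟨a, c, hac, rfl⟩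
    have ha : a ∈ s := (hG.1 hac).1
    obtain ⟨-, hcout⟩ := (hred a ha).2 a c hac Relation.ReflTransGen.refl
    exact ⟨c, by simp, (hG.1 hac).2, hcout⟩

/-! ### From a leaf induced path partition to forest-basedness -/

lemma forestBased_of_lipp {s : Set U} {A : U → U → Prop}
    (hsup : ∀ ⦃u v⦄, A u v → u ∈ s ∧ v ∈ s)
    (hacyc : ∀ v, ¬ Relation.TransGen A v v)
    (h : HasLIPP s A) : ForestBasedOn s A := by
  obtain ⟨P, hP1, hP2, hP3⟩ := h
  set F : U → U → Prop := fun u v => ∃ p ∈ P, Consec p u v with hF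
  have hFA : ∀ ⦃u v⦄, F u v → A u v := by
    rintro u v ⟨p, hp, hcons⟩
    exact hcons.chain' ((isInducedPathOn_iff.1 (hP1 p hp)).1.2.2.1)
  have hsame : ∀ a b, (F a b ∨ F b a) → ∀ q ∈ P, (a ∈ q ↔ b ∈ q) := by
    have key : ∀ a b, F a b → ∀ q ∈ P, (a ∈ q ↔ b ∈ q) := by
      rintro a b ⟨p, hp, hcons⟩ q hq
      have haq : a ∈ s := (hsup (hFA ⟨p, hp, hcons⟩)).1
      obtain ⟨pa, -, huniqa⟩ := hP2 a haq
      have hbq : b ∈ s := (hsup (hFA ⟨p, hp, hcons⟩)).2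
      obtain ⟨pb, -, huniqb⟩ := hP2 b hbq
      constructor
      · intro h'
        have h1 : q = pa := huniqa q ⟨hq, h'⟩
        have h2 : p = pa := huniqa p ⟨hp, hcons.mem_left⟩
        rw [h1, ← h2]; exact hcons.mem_right
      · intro h'
        have h1 : q = pb := huniqb q ⟨hq, h'⟩
        have h2 : p = pb := huniqb p ⟨hp, hcons.mem_right⟩
        rw [h1, ← h2]; exact hcons.mem_left
    rintro a b (hab | hba) q hq
    · exact key a b hab q hq
    · exact (key b a hba q hq).symm
  refine ⟨F, hFA, ?_, ?_, ?_, ?_⟩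
  · intro v hv
    exact hacyc v (transGen_le_of_arc
      (fun a b h' => Relation.TransGen.single (hFA h')) hv)
  · rintro u w v ⟨p, hp, hcons⟩ ⟨p', hp', hcons'⟩
    have hvs : v ∈ s := (hsup (hFA ⟨p, hp, hcons⟩)).2
    obtain ⟨pv, -, huniqv⟩ := hP2 v hvs
    have h1 : p = pv := huniqv p ⟨hp, hcons.mem_right⟩
    have h2 : p' = pv := huniqv p' ⟨hp', hcons'.mem_right⟩
    refine consec_pred_unique ?_ (h1 ▸ hcons) (h2 ▸ hcons')
    exact (isInducedPathOn_iff.1 (hP1 pv (h1 ▸ hp))).1.2.1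
  · intro v hv
    constructor
    · intro hno
      obtain ⟨p, ⟨hp, hvp⟩, -⟩ := hP2 v hv
      obtain ⟨x, hlast, hxleaf⟩ := hP3 p hp
      by_cases hvx : v = x
      · exact hvx ▸ hxleaf
      · obtain ⟨u, hcons⟩ := mem_consec_of_ne_last hvp hlast hvx
        exact absurd ⟨p, hp, hcons⟩ (hno u)
    · intro hleaf u ⟨p, hp, hcons⟩
      exact hleaf.2 u (hcons.chain' ((isInducedPathOn_iff.1 (hP1 p hp)).1.2.2.1))
  · intro u v hA hnF hreach
    have hus : u ∈ s := (hsup hA).1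
    obtain ⟨pu, ⟨hpu, hupu⟩, -⟩ := hP2 u hus
    have hvpu : v ∈ pu := by
      have : ∀ q ∈ P, (u ∈ q ↔ v ∈ q) := by
        clear hA hnF
        induction hreach with
        | refl => intro q hq; rfl
        | tail hst hstep ih =>
          intro q hq
          exact (ih q hq).trans (hsame _ _ hstep q hq)
      exact (this pu hpu).1 hupu
    exact hnF ⟨pu, hpu, (isInducedPathOn_iff.1 (hP1 pu hpu)).2 u v hA hupu hvpu⟩

/-! ### Cherry-picking steps -/

lemma good_standard {s s' : Set U} {A A' : U → U → Prop} (hG : Good s A)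
    {x y : U} (h : StandardPickAt s A x y s' A') : Good s' A' := by
  obtain ⟨⟨hxy, hx, hy, -⟩, w, hwx, hwy, hsup⟩ := h
  have hG1 := good_leafdel hG hy hwy hwx hxy
  rcases hsup with ⟨-, rfl, rfl⟩ | ⟨hsub, z, o, hz, ho, rfl, rfl⟩
  · exact hG1
  · exact good_suppress hG1 hsub hz ho

lemma good_retic {s s' : Set U} {A A' : U → U → Prop} (hG : Good s A)
    {x y : U} (h : ReticPickAt s A x y s' A') : Good s' A' := by
  obtain ⟨⟨hxy, hx, hy, -⟩, x', y', hx'x, hy'y, hret, hx'y', s₁, A₁, hsup1, hsup2⟩ := h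
  have hxny' : x ≠ y' := fun h' => hx.2 y (h' ▸ hy'y)
  have hG0 : Good s (fun a b => A a b ∧ ¬(a = x' ∧ b = y')) :=
    good_arcdel hG hx'y' hx'x hxny' hy'y
  have hG1 : Good s₁ A₁ := by
    rcases hsup1 with ⟨-, rfl, rfl⟩ | ⟨hsub, z, o, hz, ho, rfl, rfl⟩
    · exact hG0
    · exact good_suppress hG0 hsub hz ho
  rcases hsup2 with ⟨-, rfl, rfl⟩ | ⟨hsub, z, o, hz, ho, rfl, rfl⟩
  · exact hG1
  · exact good_suppress hG1 hsub hz ho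

lemma good_cherryStep {N C : Set U × (U → U → Prop)} (hG : Good N.1 N.2)
    (h : CherryStep N C) : Good C.1 C.2 := by
  obtain ⟨x, y, h | h⟩ := h
  · exact good_standard hG h
  · exact good_retic hG h

lemma lipp_standard {s s' : Set U} {A A' : U → U → Prop} (hG : Good s A)
    {x y : U} (h : StandardPickAt s A x y s' A') (hL : HasLIPP s' A') :
    HasLIPP s A := by
  obtain ⟨⟨hxy, hx, hy, -⟩, w, hwx, hwy, hsup⟩ := h
  have hG1 := good_leafdel hG hy hwy hwx hxy
  have hL1 : HasLIPP (s \ {y}) (fun a b => A a b ∧ a ≠ y ∧ b ≠ y) := by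
    rcases hsup with ⟨-, rfl, rfl⟩ | ⟨hsub, z, o, hz, ho, rfl, rfl⟩
    · exact hL
    · have hwny : w ≠ y := hG.ne_of_arc hwy
      have hA₁wx : A w x ∧ w ≠ y ∧ x ≠ y := ⟨hwx, hwny, hxy⟩
      have hox : o = x := by
        obtain ⟨o', -, ho'⟩ := hsub.2.2
        rw [ho' o ho, ho' x hA₁wx]
      subst hox
      have hleafo : DLeaf (s \ {y}) (fun a b => A a b ∧ a ≠ y ∧ b ≠ y) o :=
        ⟨⟨hx.1, by simp [hxy]⟩, fun v hv => hx.2 v hv.1⟩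
      exact lipp_suppress hG1 hsub hz ho hleafo hL
  exact lipp_leafdel hG hy hwy hwx hxy hL1

lemma lipp_retic {s s' : Set U} {A A' : U → U → Prop} (hG : Good s A)
    {x y : U} (h : ReticPickAt s A x y s' A') (hL : HasLIPP s' A') :
    HasLIPP s A := by
  obtain ⟨⟨hxy, hx, hy, -⟩, x', y', hx'x, hy'y, hret, hx'y', s₁, A₁, hsup1, hsup2⟩ := h
  have hx'ny' : x' ≠ y' := hG.ne_of_arc hx'y'
  have hyx' : y ≠ x' := fun h' => hy.2 x (h' ▸ hx'x)
  have hxny' : x ≠ y' := fun h' => hx.2 y (h' ▸ hy'y)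
  have hG0 : Good s (fun a b => A a b ∧ ¬(a = x' ∧ b = y')) :=
    good_arcdel hG hx'y' hx'x hxny' hy'y
  have hA₀y'y : A y' y ∧ ¬(y' = x' ∧ y = y') := ⟨hy'y, fun h' => hx'ny' h'.1.symm⟩
  have hA₀x'x : A x' x ∧ ¬(x' = x' ∧ x = y') := ⟨hx'x, fun h' => hxny' h'.2⟩
  have hxleaf₀ : DLeaf s (fun a b => A a b ∧ ¬(a = x' ∧ b = y')) x :=
    ⟨hx.1, fun v hv => hx.2 v hv.1⟩
  have hG1 : Good s₁ A₁ := by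
    rcases hsup1 with ⟨-, rfl, rfl⟩ | ⟨hsub, z, o, hz, ho, rfl, rfl⟩
    · exact hG0
    · exact good_suppress hG0 hsub hz ho
  have hA₁y'y : A₁ y' y := by
    rcases hsup1 with ⟨-, -, rfl⟩ | ⟨hsub, z, o, hz, ho, -, rfl⟩
    · exact hA₀y'y
    · exact Or.inl ⟨hA₀y'y, hx'ny'.symm, hyx'⟩
  have hyleaf1 : DLeaf s₁ A₁ y := by
    rcases hsup1 with ⟨-, rfl, rfl⟩ | ⟨hsub, z, o, hz, ho, rfl, rfl⟩
    · exact ⟨hy.1, fun v hv => hy.2 v hv.1⟩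
    · refine ⟨⟨hy.1, by simp [hyx']⟩, ?_⟩
      rintro v (⟨hv, -, -⟩ | ⟨h1, -⟩)
      · exact hy.2 v hv.1
      · exact hy.2 x' (h1 ▸ hz).1
  have hL1 : HasLIPP s₁ A₁ := by
    rcases hsup2 with ⟨-, rfl, rfl⟩ | ⟨hsub2, z2, o2, hz2, ho2, rfl, rfl⟩
    · exact hL
    · have ho2y : o2 = y := by
        obtain ⟨o', -, ho'⟩ := hsub2.2.2
        rw [ho' o2 ho2, ho' y hA₁y'y]
      subst ho2y
      exact lipp_suppress hG1 hsub2 hz2 ho2 hyleaf1 hL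
  have hL0 : HasLIPP s (fun a b => A a b ∧ ¬(a = x' ∧ b = y')) := by
    rcases hsup1 with ⟨-, rfl, rfl⟩ | ⟨hsub1, z1, o1, hz1, ho1, rfl, rfl⟩
    · exact hL1
    · have ho1x : o1 = x := by
        obtain ⟨o', -, ho'⟩ := hsub1.2.2
        rw [ho' o1 ho1, ho' x hA₀x'x]
      subst ho1x
      exact lipp_suppress hG0 hsub1 hz1 ho1 hxleaf₀ hL1
  exact lipp_arcdel hG hx'y' hx'x hx hy'y hL0

lemma lipp_cherryStep {N C : Set U × (U → U → Prop)} (hG : Good N.1 N.2)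
    (h : CherryStep N C) (hL : HasLIPP C.1 C.2) : HasLIPP N.1 N.2 := by
  obtain ⟨x, y, h | h⟩ := h
  · exact lipp_standard hG h hL
  · exact lipp_retic hG h hL

/-- Every orchard network is forest-based: if `N = (s, A)` is
a network that can be reduced to a reduced DAG by a sequence of cherry-picking
operations, then `N` is forest-based. -/
theorem orchard_forestBased
    {U : Type*} (s : Set U) (A : U → U → Prop)
    (hdag : IsDag s A)
    (hnet : IsNetwork s A)
    (horchard : Reducible s A) :
    ForestBasedOn s A := by
  obtain ⟨hfin, hsup, hacyc⟩ := hdag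
  have hGood : Good s A := ⟨hsup, hacyc, hnet.2.2.2.1⟩
  obtain ⟨N', hchain, hred⟩ := horchard
  have hmain : Good (s, A).1 (s, A).2 → HasLIPP (s, A).1 (s, A).2 := by
    refine Relation.ReflTransGen.head_induction_on
      (motive := fun N _ => Good N.1 N.2 → HasLIPP N.1 N.2) hchain ?_ ?_
    · intro hG'
      exact lipp_of_reduced hG' hred
    · intro a c h' hchain' ih hG'
      exact lipp_cherryStep hG' h' (ih (good_cherryStep hG' h'))
  exact forestBased_of_lipp hsup hacyc (hmain hGood)

end Paper
end

section
/- Every forest-based unrooted phylogenetic network is tree-based: if N is an unrooted phylogenetic network that contains a spanning forest F with leaf set L(N) such that each tree of F is an induced subgraph of N, then N contains a spanning tree with leaf set L(N). -/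
/-!
Extend the forest `F` inside the connected network `N` to a spanning tree `T`, so `F ≤ T ≤ N`.
Degrees can only grow from `F` to `T` to `N`: a leaf of `T` has `F`-degree at most 1 and is
therefore a leaf of `N`, while a leaf of `N` has `T`-degree at most 1, and at least 1 because `T`
connects it to its neighbour.
-/

namespace Paper

variable {V : Type*}

/-- The leaf set of an undirected graph: its vertices of degree 1. -/
def leafSet (G : SimpleGraph V) : Set V := {v : V | (G.neighborSet v).ncard = 1}

/-- `G` is an unrooted phylogenetic network: a simple, connected, undirected
graph with nonempty leaf set and no vertex of degree 2. -/
def IsUPN (G : SimpleGraph V) : Prop :=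
  G.Connected ∧ (leafSet G).Nonempty ∧ ∀ v : V, (G.neighborSet v).ncard ≠ 2

/-- `G` is forest-based: it contains a spanning forest `F` (an acyclic spanning
subgraph) whose set of vertices of degree at most 1 is exactly `leafSet G`, and
such that every edge of `G` has its two ends in different connected components
of `F` (i.e. each tree of `F` is an induced subgraph of `G`). -/
def ForestBasedU (G : SimpleGraph V) : Prop :=
  ∃ F : SimpleGraph V, F ≤ G ∧ F.IsAcyclic ∧
    {v : V | (F.neighborSet v).ncard ≤ 1} = leafSet G ∧
    ∀ u v : V, G.Adj u v → ¬ F.Adj u v → ¬ F.Reachable u v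

/-- `G` is tree-based: it contains a spanning tree (a connected acyclic
spanning subgraph) whose set of degree-1 vertices is exactly `leafSet G`. -/
def TreeBasedU (G : SimpleGraph V) : Prop :=
  ∃ T : SimpleGraph V, T ≤ G ∧ T.Connected ∧ T.IsAcyclic ∧
    {v : V | (T.neighborSet v).ncard = 1} = leafSet G

/-- An (undirected) path in `G`: a nonempty list of pairwise distinct vertices,
consecutive ones joined by edges. -/
def UPath (G : SimpleGraph V) (p : List V) : Prop :=
  p ≠ [] ∧ p.Nodup ∧ p.Chain' G.Adj

/-- An induced path in `G`: a path whose vertex set induces no edges other than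
the consecutive edges of the path. -/
def UInducedPath (G : SimpleGraph V) (p : List V) : Prop :=
  UPath G p ∧ ∀ i j : Fin p.length, G.Adj (p.get i) (p.get j) →
    (j : ℕ) = (i : ℕ) + 1 ∨ (i : ℕ) = (j : ℕ) + 1

/-- The path `p` intersects the leaf set of `G` precisely in its two (distinct)
end vertices. -/
def MeetsLeavesExactlyAtEnds (G : SimpleGraph V) (p : List V) : Prop :=
  ∃ a b : V, p.head? = some a ∧ p.getLast? = some b ∧ a ≠ b ∧
    a ∈ leafSet G ∧ b ∈ leafSet G ∧
    ∀ v ∈ p, v ∈ leafSet G → v = a ∨ v = b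

open SimpleGraph

section

variable [Finite V]

lemma ncard_neighborSet_le_of_le {H G : SimpleGraph V} (h : H ≤ G) (v : V) :
    (H.neighborSet v).ncard ≤ (G.neighborSet v).ncard :=
  Set.ncard_le_ncard (neighborSet_mono h v) (Set.toFinite _)

lemma leafSet_eq_of_le_of_le {F T G : SimpleGraph V} (hFT : F ≤ T) (hTG : T ≤ G)
    (hT : T.Preconnected) (hF : {v | (F.neighborSet v).ncard ≤ 1} = leafSet G) :
    leafSet T = leafSet G := by
  ext v
  constructor
  · intro hv
    rw [← hF]
    exact (ncard_neighborSet_le_of_le hFT v).trans_eq hv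
  · intro hv
    obtain ⟨w, hw⟩ := Set.ncard_eq_one.mp hv
    have hvw : G.Adj v w := by
      change w ∈ G.neighborSet v
      simp [hw]
    have hpos : 0 < (T.neighborSet v).ncard :=
      (Set.ncard_pos (Set.toFinite _)).mpr ((hT v w).nonempty_neighborSet_left hvw.ne)
    have hle : (T.neighborSet v).ncard ≤ 1 := (ncard_neighborSet_le_of_le hTG v).trans_eq hv
    exact le_antisymm hle hpos

end

/-- Every forest-based unrooted phylogenetic network is
tree-based: if `N` contains a spanning forest `F` with leaf set `L(N)` such
that each tree of `F` is an induced subgraph of `N`, then `N` contains a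
spanning tree with leaf set `L(N)`. -/
theorem forestBased_treeBased
    {V : Type*} [Fintype V] (G : SimpleGraph V)
    (hUPN : IsUPN G) (hFB : ForestBasedU G) :
    TreeBasedU G := by
  obtain ⟨hG, -, -⟩ := hUPN
  obtain ⟨F, hFG, hF, hFleaves, -⟩ := hFB
  obtain ⟨T, hFT, hTG, hT⟩ := hG.exists_isTree_le_of_le_of_isAcyclic hFG hF
  exact ⟨T, hTG, hT.connected, hT.isAcyclic,
    leafSet_eq_of_le_of_le hFT hTG hT.connected.preconnected hFleaves⟩

end Paper
end

section
/- The undirected graph N with vertex set {x, y, p, q, u, v} and edge set {xp, pv, pu, uv, uq, vq, qy} is an unrooted phylogenetic network with leaf set {x, y} that is tree-based but not forest-based: its only spanning trees with leaf set {x, y} are the paths x, p, v, u, q, y and x, p, u, v, q, y, neither of which is an induced path of N. -/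
/-!
Unrooted phylogenetic networks: simple, connected, undirected graphs with
nonempty leaf set and no degree-2 vertices, formalized via `SimpleGraph`.
-/

namespace Paper

variable {V : Type*}

/-- The example network on vertex set `{x, y, p, q, u, v}` (encoded as
`x = 0, y = 1, p = 2, q = 3, u = 4, v = 5` in `Fin 6`) with edge set
`{xp, pv, pu, uv, uq, vq, qy}`. -/
def exG : SimpleGraph (Fin 6) :=
  SimpleGraph.fromRel fun a b =>
    (a, b) ∈ [((0 : Fin 6), (2 : Fin 6)), (2, 5), (2, 4), (4, 5), (4, 3),
      (5, 3), (3, 1)]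

/-- The graph of the path `x, p, v, u, q, y`. -/
def exT₁ : SimpleGraph (Fin 6) :=
  SimpleGraph.fromRel fun a b =>
    (a, b) ∈ [((0 : Fin 6), (2 : Fin 6)), (2, 5), (5, 4), (4, 3), (3, 1)]

/-- The graph of the path `x, p, u, v, q, y`. -/
def exT₂ : SimpleGraph (Fin 6) :=
  SimpleGraph.fromRel fun a b =>
    (a, b) ∈ [((0 : Fin 6), (2 : Fin 6)), (2, 4), (4, 5), (5, 3), (3, 1)]

end Paper

/-!
The vertices `u` and `v` are adjacent twins: both have neighbourhood `{p, q}` besides each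
other. In an acyclic subgraph in which both keep at least two neighbours, `u` and `v` must be
adjacent (otherwise `u, p, v, q` is a 4-cycle) and `p, q` must be split between them (otherwise
there is a triangle). Together with the forced pendant edges `xp` and `qy` this leaves exactly
the two Hamiltonian paths as spanning trees. If moreover every tree of the forest is induced,
then, say, `u` is joined to both `v` and `p`, so the edge `vp` of `N` lies inside one tree and
must belong to the forest, contradicting the split.
-/

theorem Set.two_le_ncard_insert_pair {α : Type*} {a b : α} (c : α) (hab : a ≠ b) :
    2 ≤ ({c, a, b} : Set α).ncard :=
  ncard_pair hab ▸ ncard_le_ncard (subset_insert c _) (toFinite _)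

namespace SimpleGraph

variable {V : Type*} {G F : SimpleGraph V} {a b c d u v : V}

theorem IsAcyclic.not_adj_of_adj_of_adj (hG : G.IsAcyclic) (hab : G.Adj a b) (hbc : G.Adj b c) :
    ¬ G.Adj a c := by
  classical
  exact fun hac => hG.cliqueFree le_rfl {a, b, c} (is3Clique_triple_iff.2 ⟨hab, hac, hbc⟩)

theorem IsAcyclic.eq_of_adj_of_adj (hG : G.IsAcyclic) (hab : G.Adj a b) (hbc : G.Adj b c)
    (had : G.Adj a d) (hdc : G.Adj d c) (hac : a ≠ c) : b = d := by
  have hpath : ∀ {x} (h₁ : G.Adj a x) (h₂ : G.Adj x c), (Walk.cons h₁ (Walk.cons h₂ .nil)).IsPath :=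
    fun h₁ h₂ => by simp [h₁.ne, h₂.ne, hac]
  have := (hG.subsingleton_path a c).elim ⟨_, hpath hab hbc⟩ ⟨_, hpath had hdc⟩
  simp only [Subtype.mk.injEq, Walk.cons.injEq] at this
  exact this.1

theorem ncard_neighborSet_eq_degree [Fintype V] [DecidableRel G.Adj] (v : V) :
    (G.neighborSet v).ncard = G.degree v := by
  rw [← card_neighborSet_eq_degree, Set.ncard_eq_toFinset_card', Set.toFinset_card]

theorem one_lt_ncard_neighborSet [Finite V] [Nontrivial V] (hG : G.Connected)
    (hv : (G.neighborSet v).ncard ≠ 1) : 1 < (G.neighborSet v).ncard := by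
  obtain ⟨w, hw⟩ := exists_ne v
  have := (hG.preconnected v w).nonempty_neighborSet_left hw.symm
  have := (Set.ncard_pos (Set.toFinite _)).2 this
  omega

theorem adj_of_neighborSet_subset_singleton (hFG : F ≤ G) (hu : G.neighborSet u ⊆ {v})
    (hF : (F.neighborSet u).Nonempty) : F.Adj u v := by
  obtain ⟨w, hw⟩ := hF
  obtain rfl : w = v := hu (hFG hw)
  exact hw

theorem adj_or_adj_of_neighborSet_subset (hFG : F ≤ G) (hu : G.neighborSet u ⊆ {v, a, b})
    (hd : 1 < (F.neighborSet u).ncard) : F.Adj u a ∨ F.Adj u b := by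
  obtain ⟨w, hw, hwv⟩ := Set.exists_ne_of_one_lt_ncard hd v
  rcases hu (hFG hw) with rfl | rfl | rfl
  exacts [absurd rfl hwv, .inl hw, .inr hw]

theorem adj_and_adj_of_neighborSet_subset (hFG : F ≤ G) (hu : G.neighborSet u ⊆ {v, a, b})
    (hab : a ≠ b) (hd : 1 < (F.neighborSet u).ncard) (huv : ¬ F.Adj u v) :
    F.Adj u a ∧ F.Adj u b := by
  have hsub : F.neighborSet u ⊆ {a, b} := fun w hw => by
    rcases hu (hFG hw) with rfl | h
    · exact absurd hw huv
    · exact h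
  have := Set.eq_of_subset_of_ncard_le hsub (by rw [Set.ncard_pair hab]; omega) (Set.toFinite _)
  simp only [Set.ext_iff, mem_neighborSet, Set.mem_insert_iff, Set.mem_singleton_iff] at this
  exact ⟨(this a).2 (.inl rfl), (this b).2 (.inr rfl)⟩

theorem IsAcyclic.twins_adj_and_split (hF : F.IsAcyclic) (hFG : F ≤ G)
    (hu : G.neighborSet u ⊆ {v, a, b}) (hv : G.neighborSet v ⊆ {u, a, b}) (huv : u ≠ v)
    (hab : a ≠ b) (hdu : 1 < (F.neighborSet u).ncard) (hdv : 1 < (F.neighborSet v).ncard) :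
    F.Adj u v ∧ (F.Adj u a ∧ F.Adj v b ∧ ¬ F.Adj u b ∧ ¬ F.Adj v a ∨
      F.Adj u b ∧ F.Adj v a ∧ ¬ F.Adj u a ∧ ¬ F.Adj v b) := by
  have hadj : F.Adj u v := by
    by_contra h
    obtain ⟨hua, hub⟩ := adj_and_adj_of_neighborSet_subset hFG hu hab hdu h
    obtain ⟨hva, hvb⟩ := adj_and_adj_of_neighborSet_subset hFG hv hab hdv (h ∘ F.adj_symm)
    exact huv (hF.eq_of_adj_of_adj hua.symm hub hva.symm hvb hab)
  have ha : ¬ (F.Adj u a ∧ F.Adj v a) := fun h => hF.not_adj_of_adj_of_adj h.1.symm hadj h.2.symm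
  have hb : ¬ (F.Adj u b ∧ F.Adj v b) := fun h => hF.not_adj_of_adj_of_adj h.1.symm hadj h.2.symm
  have hu_ab := adj_or_adj_of_neighborSet_subset hFG hu hdu
  have hv_ab := adj_or_adj_of_neighborSet_subset hFG hv hdv
  exact ⟨hadj, by tauto⟩

end SimpleGraph

namespace Paper

open SimpleGraph

variable {V : Type*}

theorem mem_leafSet_iff_degree [Fintype V] {G : SimpleGraph V} [DecidableRel G.Adj] {v : V} :
    v ∈ leafSet G ↔ G.degree v = 1 := by
  rw [leafSet, Set.mem_ofPred, ncard_neighborSet_eq_degree]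

theorem not_forestBasedU_of_adjacent_twins {G : SimpleGraph V} {u v a b : V}
    (hu : G.neighborSet u = {v, a, b}) (hv : G.neighborSet v = {u, a, b}) (hab : a ≠ b) :
    ¬ ForestBasedU G := by
  rintro ⟨F, hFG, hF, hleaf, hind⟩
  have hdeg : ∀ w c, G.neighborSet w = {c, a, b} → 1 < (F.neighborSet w).ncard := by
    intro w c hw
    by_contra h
    have hleaf_w : w ∈ leafSet G := hleaf ▸ Set.mem_ofPred.2 (not_lt.1 h)
    change (G.neighborSet w).ncard = 1 at hleaf_w
    have := Set.two_le_ncard_insert_pair c hab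
    rw [hw] at hleaf_w
    omega
  have huv : G.Adj u v := by simp [← mem_neighborSet, hu]
  have hva : G.Adj v a := by simp [← mem_neighborSet, hv]
  have hvb : G.Adj v b := by simp [← mem_neighborSet, hv]
  obtain ⟨hadj, ⟨hua, -, -, hnva⟩ | ⟨hub, -, -, hnvb⟩⟩ :=
    hF.twins_adj_and_split hFG hu.le hv.le huv.ne hab (hdeg u v hu) (hdeg v u hv)
  · exact hind v a hva hnva (hadj.symm.reachable.trans hua.reachable)
  · exact hind v b hvb hnvb (hadj.symm.reachable.trans hub.reachable)

instance : DecidableRel exG.Adj := inferInstanceAs (DecidableRel (fromRel _).Adj)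

instance : DecidableRel exT₁.Adj := inferInstanceAs (DecidableRel (fromRel _).Adj)

instance : DecidableRel exT₂.Adj := inferInstanceAs (DecidableRel (fromRel _).Adj)

theorem leafSet_exG : leafSet exG = {0, 1} := by
  ext w
  simp only [mem_leafSet_iff_degree, Set.mem_insert_iff, Set.mem_singleton_iff]
  revert w
  decide

theorem neighborSet_exG_zero : exG.neighborSet 0 = {2} := by
  ext w; simp only [mem_neighborSet, Set.mem_singleton_iff]; revert w; decide

theorem neighborSet_exG_one : exG.neighborSet 1 = {3} := by
  ext w; simp only [mem_neighborSet, Set.mem_singleton_iff]; revert w; decide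

theorem neighborSet_exG_four : exG.neighborSet 4 = {5, 2, 3} := by
  ext w
  simp only [mem_neighborSet, Set.mem_insert_iff, Set.mem_singleton_iff]
  revert w
  decide

theorem neighborSet_exG_five : exG.neighborSet 5 = {4, 2, 3} := by
  ext w
  simp only [mem_neighborSet, Set.mem_insert_iff, Set.mem_singleton_iff]
  revert w
  decide

theorem not_forestBasedU_exG : ¬ ForestBasedU exG :=
  not_forestBasedU_of_adjacent_twins neighborSet_exG_four neighborSet_exG_five (by decide)

theorem eq_exT₁_of_adj {T : SimpleGraph (Fin 6)} (hT : T ≤ exG)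
    (h02 : T.Adj 0 2) (h25 : T.Adj 2 5) (h54 : T.Adj 5 4) (h43 : T.Adj 4 3) (h31 : T.Adj 3 1)
    (hn24 : ¬ T.Adj 2 4) (hn53 : ¬ T.Adj 5 3) : T = exT₁ := by
  ext a b
  have := @hT a b
  fin_cases a <;> fin_cases b <;> simp_all [exT₁, exG, T.adj_comm]

theorem eq_exT₂_of_adj {T : SimpleGraph (Fin 6)} (hT : T ≤ exG)
    (h02 : T.Adj 0 2) (h24 : T.Adj 2 4) (h45 : T.Adj 4 5) (h53 : T.Adj 5 3) (h31 : T.Adj 3 1)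
    (hn25 : ¬ T.Adj 2 5) (hn43 : ¬ T.Adj 4 3) : T = exT₂ := by
  ext a b
  have := @hT a b
  fin_cases a <;> fin_cases b <;> simp_all [exT₂, exG, T.adj_comm]

theorem eq_exT₁_or_exT₂ {T : SimpleGraph (Fin 6)} (hT : T ≤ exG) (hconn : T.Connected)
    (hacyc : T.IsAcyclic) (hleaf : leafSet T = leafSet exG) : T = exT₁ ∨ T = exT₂ := by
  have hint : ∀ w ∉ leafSet exG, 1 < (T.neighborSet w).ncard :=
    fun w hw => one_lt_ncard_neighborSet hconn fun h => hw (hleaf ▸ (h : w ∈ leafSet T))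
  have h02 := adj_of_neighborSet_subset_singleton hT neighborSet_exG_zero.le
    ((hconn.preconnected 0 1).nonempty_neighborSet_left (by decide))
  have h13 := adj_of_neighborSet_subset_singleton hT neighborSet_exG_one.le
    ((hconn.preconnected 1 0).nonempty_neighborSet_left (by decide))
  obtain ⟨h45, ⟨h42, h53, hn43, hn52⟩ | ⟨h43, h52, hn42, hn53⟩⟩ :=
    hacyc.twins_adj_and_split hT neighborSet_exG_four.le neighborSet_exG_five.le (by decide)
      (by decide) (hint 4 (by simp [leafSet_exG])) (hint 5 (by simp [leafSet_exG]))
  · exact .inr (eq_exT₂_of_adj hT h02 h42.symm h45 h53 h13.symm (hn52 ∘ T.adj_symm) hn43)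
  · exact .inl (eq_exT₁_of_adj hT h02 h52.symm h45.symm h43 h13.symm (hn42 ∘ T.adj_symm) hn53)

theorem isTree_exT₁ : exT₁.IsTree :=
  isTree_iff_connected_and_card.2 ⟨(connected_iff _).2 ⟨by decide, ⟨0⟩⟩, by
    rw [Nat.card_eq_fintype_card, Nat.card_eq_fintype_card, Fintype.card_fin, ← edgeFinset_card]
    decide⟩

theorem isTree_exT₂ : exT₂.IsTree :=
  isTree_iff_connected_and_card.2 ⟨(connected_iff _).2 ⟨by decide, ⟨0⟩⟩, by
    rw [Nat.card_eq_fintype_card, Nat.card_eq_fintype_card, Fintype.card_fin, ← edgeFinset_card]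
    decide⟩

theorem exT₁_le_exG : exT₁ ≤ exG := by
  intro a b; revert a b; decide

theorem exT₂_le_exG : exT₂ ≤ exG := by
  intro a b; revert a b; decide

theorem leafSet_exT₁ : leafSet exT₁ = {0, 1} := by
  ext w
  simp only [mem_leafSet_iff_degree, Set.mem_insert_iff, Set.mem_singleton_iff]
  revert w
  decide

theorem leafSet_exT₂ : leafSet exT₂ = {0, 1} := by
  ext w
  simp only [mem_leafSet_iff_degree, Set.mem_insert_iff, Set.mem_singleton_iff]
  revert w
  decide

theorem isUPN_exG : IsUPN exG := by
  refine ⟨(connected_iff _).2 ⟨by decide, ⟨0⟩⟩, ⟨0, by simp [leafSet_exG]⟩, fun w => ?_⟩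
  rw [ncard_neighborSet_eq_degree]
  revert w
  decide

theorem uPath_exG_xpvuqy : UPath exG [0, 2, 5, 4, 3, 1] :=
  ⟨List.cons_ne_nil _ _, by decide, (by decide : List.IsChain exG.Adj [0, 2, 5, 4, 3, 1])⟩

theorem uPath_exG_xpuvqy : UPath exG [0, 2, 4, 5, 3, 1] :=
  ⟨List.cons_ne_nil _ _, by decide, (by decide : List.IsChain exG.Adj [0, 2, 4, 5, 3, 1])⟩

theorem not_uInducedPath_exG_xpvuqy : ¬ UInducedPath exG [0, 2, 5, 4, 3, 1] :=
  fun h => absurd (h.2 ⟨1, by decide⟩ ⟨3, by decide⟩ (by decide)) (by decide)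

theorem not_uInducedPath_exG_xpuvqy : ¬ UInducedPath exG [0, 2, 4, 5, 3, 1] :=
  fun h => absurd (h.2 ⟨1, by decide⟩ ⟨3, by decide⟩ (by decide)) (by decide)

/-- The graph `N` with vertex set `{x, y, p, q, u, v}` and
edge set `{xp, pv, pu, uv, uq, vq, qy}` is an unrooted phylogenetic network
with leaf set `{x, y}` that is tree-based but not forest-based: its only
spanning trees with leaf set `{x, y}` are the paths `x, p, v, u, q, y` and
`x, p, u, v, q, y`, neither of which is an induced path of `N`. -/
theorem example_treeBased_not_forestBased :
    IsUPN exG ∧ leafSet exG = {0, 1} ∧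
    TreeBasedU exG ∧ ¬ ForestBasedU exG ∧
    -- the two paths are spanning trees of `exG` with leaf set `{x, y}`
    (exT₁ ≤ exG ∧ exT₁.Connected ∧ exT₁.IsAcyclic ∧
      {v : Fin 6 | (exT₁.neighborSet v).ncard = 1} = leafSet exG) ∧
    (exT₂ ≤ exG ∧ exT₂.Connected ∧ exT₂.IsAcyclic ∧
      {v : Fin 6 | (exT₂.neighborSet v).ncard = 1} = leafSet exG) ∧
    UPath exG [0, 2, 5, 4, 3, 1] ∧ UPath exG [0, 2, 4, 5, 3, 1] ∧
    -- they are the only such spanning trees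
    (∀ T : SimpleGraph (Fin 6), T ≤ exG → T.Connected → T.IsAcyclic →
      {v : Fin 6 | (T.neighborSet v).ncard = 1} = leafSet exG →
      T = exT₁ ∨ T = exT₂) ∧
    -- and neither is an induced path of `exG`
    ¬ UInducedPath exG [0, 2, 5, 4, 3, 1] ∧
    ¬ UInducedPath exG [0, 2, 4, 5, 3, 1] := by
  have spanning₁ : exT₁ ≤ exG ∧ exT₁.Connected ∧ exT₁.IsAcyclic ∧ leafSet exT₁ = leafSet exG :=
    ⟨exT₁_le_exG, isTree_exT₁.connected, isTree_exT₁.isAcyclic, by rw [leafSet_exT₁, leafSet_exG]⟩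
  have spanning₂ : exT₂ ≤ exG ∧ exT₂.Connected ∧ exT₂.IsAcyclic ∧ leafSet exT₂ = leafSet exG :=
    ⟨exT₂_le_exG, isTree_exT₂.connected, isTree_exT₂.isAcyclic, by rw [leafSet_exT₂, leafSet_exG]⟩
  exact ⟨isUPN_exG, leafSet_exG, ⟨exT₁, spanning₁⟩, not_forestBasedU_exG, spanning₁, spanning₂,
    uPath_exG_xpvuqy, uPath_exG_xpuvqy, fun _ => eq_exT₁_or_exT₂,
    not_uInducedPath_exG_xpvuqy, not_uInducedPath_exG_xpuvqy⟩

end Paper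
end

section
/- Every unrooted phylogenetic tree admits a leaf induced path partition: if T is a tree with at least two vertices, no vertex of degree 2, and leaf set L(T), then the vertex set of T can be partitioned into a collection of vertex-disjoint paths of T such that every single-vertex path of the collection is contained in L(T) and every other path intersects L(T) precisely in its two end vertices. -/
/-!
Unrooted phylogenetic networks: simple, connected, undirected graphs with
nonempty leaf set and no degree-2 vertices, formalized via `SimpleGraph`.
-/

namespace Paper

variable {V : Type*}

/-!
Fix any vertex as root and cut the tree at the edges: the branch at `v` below its parent `p`
consists of `v` and the branches at its children. By induction on branches, each branch has a
partition into leaf paths, and also one of the branch minus a pendant path running from `v`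
down to a leaf. A leaf `v` is a singleton path and a pendant path by itself. A vertex that is not
a leaf has degree at least 3, hence at least two children `c₁ ≠ c₂`: it either extends the
pendant path of `c₁`, or joins the pendant paths of `c₁` and `c₂` into a path between two
leaves; every other child contributes its full partition. At the root, taken as its own parent,
the branch is the whole tree.
-/

section

open Set

variable {T : SimpleGraph V}

/-- For `p` adjacent to `v`: the vertices on the side of `v` of the edge `pv`. For `p = v`, or any
`p` not adjacent to `v`, nothing is deleted and this is the whole component of `v`. -/
def branch (T : SimpleGraph V) (p v : V) : Set V :=
  {w | (T.deleteEdges {s(p, v)}).Reachable v w}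

lemma mem_branch_self (p v : V) : v ∈ branch T p v := SimpleGraph.Reachable.refl v

lemma branch_self (hconn : T.Connected) (v : V) : branch T v v = univ := by
  have : T.deleteEdges {s(v, v)} = T := by simp
  ext w
  simpa [branch, this] using hconn.preconnected v w

lemma self_notMem_branch (hacy : T.IsAcyclic) {v c : V} (hvc : T.Adj v c) :
    v ∉ branch T v c :=
  fun h => SimpleGraph.isAcyclic_iff_forall_adj_isBridge.mp hacy hvc h.symm

lemma reachable_deleteEdges_of_walk {H : SimpleGraph V} (hH : H ≤ T) {v c w : V}
    (q : H.Walk c w) (hv : v ∉ q.support) (u : V) : (T.deleteEdges {s(u, v)}).Reachable c w := by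
  refine ⟨q.transfer _ fun e he => ?_⟩
  rw [SimpleGraph.edgeSet_deleteEdges]
  refine ⟨SimpleGraph.edgeSet_mono hH (q.edges_subset_edgeSet he), ?_⟩
  rintro rfl
  exact hv (q.snd_mem_support_of_mem_edges he)

lemma reachable_deleteEdges_of_mem_branch (hacy : T.IsAcyclic) {v c w : V} (hvc : T.Adj v c)
    (hw : w ∈ branch T v c) (u : V) : (T.deleteEdges {s(u, v)}).Reachable c w := by
  classical
  obtain ⟨q⟩ := hw
  exact reachable_deleteEdges_of_walk (T.deleteEdges_le _) q
    (fun h => self_notMem_branch hacy hvc (q.takeUntil v h).reachable) u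

lemma branch_eq_insert_biUnion (hacy : T.IsAcyclic) (p v : V) :
    branch T p v = insert v (⋃ c ∈ T.neighborSet v \ {p}, branch T v c) := by
  classical
  ext w
  refine ⟨fun ⟨q⟩ => ?_, ?_⟩
  · obtain ⟨q, hq⟩ : ∃ q : (T.deleteEdges {s(p, v)}).Walk v w, q.IsPath := ⟨_, q.bypass_isPath⟩
    cases q with
    | nil => exact mem_insert _ _
    | @cons _ c _ hvc q =>
      obtain ⟨hvc, hne⟩ := SimpleGraph.deleteEdges_adj.mp hvc
      have hcp : c ≠ p := by rintro rfl; exact hne (by simp [Sym2.eq_swap])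
      refine mem_insert_of_mem _ (mem_iUnion₂.mpr ⟨c, ⟨hvc, hcp⟩, ?_⟩)
      show (T.deleteEdges {s(v, c)}).Reachable c w
      rw [Sym2.eq_swap]
      exact reachable_deleteEdges_of_walk (T.deleteEdges_le _) q
        (SimpleGraph.Walk.cons_isPath_iff _ _ |>.mp hq).2 c
  · rintro (rfl | hw)
    · exact mem_branch_self _ _
    obtain ⟨c, ⟨hvc, hcp⟩, hw⟩ := mem_iUnion₂.mp hw
    refine SimpleGraph.Reachable.trans (SimpleGraph.Adj.reachable ?_)
      (reachable_deleteEdges_of_mem_branch hacy hvc hw p)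
    refine SimpleGraph.deleteEdges_adj.mpr ⟨hvc, fun h => ?_⟩
    rcases Sym2.eq_iff.mp (mem_singleton_iff.mp h) with ⟨-, h⟩ | ⟨-, h⟩
    · exact hvc.ne h.symm
    · exact hcp h

lemma branch_subset_branch (hacy : T.IsAcyclic) {p v c : V} (hc : c ∈ T.neighborSet v \ {p}) :
    branch T v c ⊆ branch T p v := by
  rw [branch_eq_insert_biUnion hacy p v]
  exact (subset_biUnion_of_mem hc).trans (subset_insert _ _)

lemma ncard_branch_lt [Finite V] (hacy : T.IsAcyclic) {p v c : V}
    (hc : c ∈ T.neighborSet v \ {p}) : (branch T v c).ncard < (branch T p v).ncard :=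
  ncard_lt_ncard <| ssubset_of_subset_not_subset (branch_subset_branch hacy hc)
    fun h => self_notMem_branch hacy hc.1 (h (mem_branch_self p v))

lemma pairwiseDisjoint_branch (hacy : T.IsAcyclic) (v : V) :
    (T.neighborSet v).PairwiseDisjoint (branch T v) := by
  intro c hc c' hc' hne
  refine disjoint_left.mpr fun w hw hw' => self_notMem_branch hacy hc ?_
  have hc'w := reachable_deleteEdges_of_mem_branch hacy hc' hw' c
  rw [Sym2.eq_swap] at hc'w
  refine (hw.trans hc'w.symm).trans (SimpleGraph.Adj.reachable ?_)
  refine SimpleGraph.deleteEdges_adj.mpr ⟨(hc' : T.Adj v c').symm, fun h => ?_⟩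
  rcases Sym2.eq_iff.mp (mem_singleton_iff.mp h) with ⟨h, -⟩ | ⟨h, -⟩
  · exact (hc' : T.Adj v c').ne h.symm
  · exact hne h.symm

def IsLeafPath (T : SimpleGraph V) (p : List V) : Prop :=
  UPath T p ∧ (∀ a : V, p = [a] → a ∈ leafSet T) ∧ (2 ≤ p.length → MeetsLeavesExactlyAtEnds T p)

def IsPendantPath (T : SimpleGraph V) (v : V) (d : List V) : Prop :=
  d.head? = some v ∧ UPath T d ∧
    ∃ b, d.getLast? = some b ∧ b ∈ leafSet T ∧ ∀ x ∈ d, x ∈ leafSet T → x = b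

lemma isLeafPath_singleton {v : V} (hv : v ∈ leafSet T) : IsLeafPath T [v] :=
  ⟨⟨List.cons_ne_nil _ _, List.nodup_singleton v, List.isChain_singleton v⟩,
    fun _ h => List.singleton_inj.mp h ▸ hv, by simp⟩

lemma isPendantPath_singleton {v : V} (hv : v ∈ leafSet T) : IsPendantPath T v [v] :=
  ⟨rfl, (isLeafPath_singleton hv).1, v, rfl, hv, fun _ hx _ => List.mem_singleton.mp hx⟩

lemma IsPendantPath.cons {v c : V} {d : List V} (hd : IsPendantPath T c d) (hvc : T.Adj v c)
    (hvd : v ∉ d) (hv : v ∉ leafSet T) : IsPendantPath T v (v :: d) := by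
  obtain ⟨hhead, ⟨hne, hnodup, hchain⟩, b, hlast, hb, honly⟩ := hd
  refine ⟨rfl, ⟨List.cons_ne_nil _ _, List.nodup_cons.mpr ⟨hvd, hnodup⟩, ?_⟩, b, ?_, hb, ?_⟩
  · exact List.isChain_cons.mpr ⟨by simp [hhead, hvc], hchain⟩
  · simp [List.getLast?_cons, hlast]
  · intro x hx hxl
    rcases List.mem_cons.mp hx with rfl | hx
    · exact absurd hxl hv
    · exact honly x hx hxl

lemma IsPendantPath.reverse_append {a b : V} {d e : List V} (hd : IsPendantPath T a d)
    (he : IsPendantPath T b e) (hab : T.Adj a b) (hde : ∀ x ∈ d, x ∉ e) :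
    IsLeafPath T (d.reverse ++ e) := by
  obtain ⟨hdhead, ⟨hdne, hdnodup, hdchain⟩, x, hdlast, hx, hdonly⟩ := hd
  obtain ⟨hehead, ⟨hene, henodup, hechain⟩, y, helast, hy, heonly⟩ := he
  have hlen : 2 ≤ (d.reverse ++ e).length := by
    have := List.length_pos_iff.mpr hdne
    have := List.length_pos_iff.mpr hene
    simp only [List.length_append, List.length_reverse]
    omega
  refine ⟨⟨by simp [hene], ?_, ?_⟩, fun _ h => absurd hlen (by simp [h]), fun _ => ?_⟩
  · exact List.nodup_append.mpr ⟨List.nodup_reverse.mpr hdnodup, henodup,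
      fun u hu w hw huw => hde u (List.mem_reverse.mp hu) (huw ▸ hw)⟩
  · refine List.isChain_append.mpr ⟨List.isChain_reverse.mpr ?_, hechain, ?_⟩
    · exact hdchain.imp fun _ _ h => h.symm
    · simp [hdhead, hehead, hab]
  · refine ⟨x, y, by simp [hdlast], by simp [helast], ?_, hx, hy, ?_⟩
    · rintro rfl
      exact hde x (List.mem_of_getLast? hdlast) (List.mem_of_getLast? helast)
    · intro u hu hul
      rcases List.mem_append.mp hu with hu | hu
      · exact Or.inl (hdonly u (List.mem_reverse.mp hu) hul)
      · exact Or.inr (heonly u hu hul)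

structure IsLeafPathPartition (T : SimpleGraph V) (S : Set V) (P : Set (List V)) : Prop where
  isLeafPath : ∀ p ∈ P, IsLeafPath T p
  mem_iff : ∀ x, x ∈ S ↔ ∃ p ∈ P, x ∈ p
  eq_of_mem : ∀ p ∈ P, ∀ q ∈ P, ∀ x ∈ p, x ∈ q → p = q

lemma IsLeafPathPartition.insert {S : Set V} {P : Set (List V)} {p : List V}
    (hP : IsLeafPathPartition T S P) (hp : IsLeafPath T p) (hpS : ∀ x ∈ p, x ∉ S) :
    IsLeafPathPartition T ({x | x ∈ p} ∪ S) (Insert.insert p P) where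
  isLeafPath := by
    rintro q (rfl | hq)
    exacts [hp, hP.isLeafPath q hq]
  mem_iff x := by
    simp only [mem_union, mem_ofPred_eq, hP.mem_iff, mem_insert_iff, exists_eq_or_imp]
  eq_of_mem := by
    rintro q (rfl | hq) r (rfl | hr) x hxq hxr
    · rfl
    · exact absurd ((hP.mem_iff x).mpr ⟨r, hr, hxr⟩) (hpS x hxq)
    · exact absurd ((hP.mem_iff x).mpr ⟨q, hq, hxq⟩) (hpS x hxr)
    · exact hP.eq_of_mem q hq r hr x hxq hxr

lemma IsLeafPathPartition.biUnion {ι : Type*} {s : Set ι} {S : ι → Set V}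
    {P : ι → Set (List V)} (hP : ∀ i ∈ s, IsLeafPathPartition T (S i) (P i))
    (hS : s.PairwiseDisjoint S) : IsLeafPathPartition T (⋃ i ∈ s, S i) (⋃ i ∈ s, P i) where
  isLeafPath p hp := by
    obtain ⟨i, hi, hp⟩ := mem_iUnion₂.mp hp
    exact (hP i hi).isLeafPath p hp
  mem_iff x := by
    constructor
    · intro hx
      obtain ⟨i, hi, hx⟩ := mem_iUnion₂.mp hx
      obtain ⟨p, hp, hxp⟩ := ((hP i hi).mem_iff x).mp hx
      exact ⟨p, mem_iUnion₂.mpr ⟨i, hi, hp⟩, hxp⟩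
    · rintro ⟨p, hp, hxp⟩
      obtain ⟨i, hi, hp⟩ := mem_iUnion₂.mp hp
      exact mem_iUnion₂.mpr ⟨i, hi, ((hP i hi).mem_iff x).mpr ⟨p, hp, hxp⟩⟩
  eq_of_mem p hp q hq x hxp hxq := by
    obtain ⟨i, hi, hp⟩ := mem_iUnion₂.mp hp
    obtain ⟨j, hj, hq⟩ := mem_iUnion₂.mp hq
    obtain rfl : i = j := hS.elim hi hj <| not_disjoint_iff.mpr
      ⟨x, ((hP i hi).mem_iff x).mpr ⟨p, hp, hxp⟩, ((hP j hj).mem_iff x).mpr ⟨q, hq, hxq⟩⟩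
    exact (hP i hi).eq_of_mem p hp q hq x hxp hxq

lemma IsLeafPathPartition.existsUnique {S : Set V} {P : Set (List V)}
    (hP : IsLeafPathPartition T S P) {x : V} (hx : x ∈ S) : ∃! p, p ∈ P ∧ x ∈ p := by
  obtain ⟨p, hp, hxp⟩ := (hP.mem_iff x).mp hx
  exact ⟨p, ⟨hp, hxp⟩, fun q ⟨hq, hxq⟩ => hP.eq_of_mem q hq p hp x hxq hxp⟩

def HasBranchPartitions (T : SimpleGraph V) (p v : V) : Prop :=
  (∃ d P, IsPendantPath T v d ∧ {x | x ∈ d} ⊆ branch T p v ∧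
    IsLeafPathPartition T (branch T p v \ {x | x ∈ d}) P) ∧
  ∃ P, IsLeafPathPartition T (branch T p v) P

lemma exists_partition_branch_diff (hacy : T.IsAcyclic) {p v : V} {K : Set V}
    (hK : K ⊆ T.neighborSet v \ {p})
    (h : ∀ c ∈ T.neighborSet v \ {p}, HasBranchPartitions T v c) :
    ∃ d : V → List V, (∀ c ∈ K, IsPendantPath T c (d c) ∧ {x | x ∈ d c} ⊆ branch T v c) ∧
      ∃ P, IsLeafPathPartition T (branch T p v \ insert v (⋃ c ∈ K, {x | x ∈ d c})) P := by
  classical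
  have hchoice : ∀ c, ∃ d P, c ∈ T.neighborSet v \ {p} →
      (c ∈ K → IsPendantPath T c d ∧ {x | x ∈ d} ⊆ branch T v c) ∧ (c ∉ K → d = []) ∧
      IsLeafPathPartition T (branch T v c \ {x | x ∈ d}) P := by
    intro c
    by_cases hc : c ∈ T.neighborSet v \ {p}
    · by_cases hcK : c ∈ K
      · obtain ⟨⟨d, P, hd, hdsub, hP⟩, -⟩ := h c hc
        exact ⟨d, P, fun _ => ⟨fun _ => ⟨hd, hdsub⟩, fun h => absurd hcK h, hP⟩⟩
      · obtain ⟨-, P, hP⟩ := h c hc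
        exact ⟨[], P, fun _ => ⟨fun h => absurd h hcK, fun _ => rfl, by simpa using hP⟩⟩
    · exact ⟨[], ∅, fun h => absurd h hc⟩
  choose d P hdP using hchoice
  refine ⟨d, fun c hc => (hdP c (hK hc)).1 hc, ⋃ c ∈ T.neighborSet v \ {p}, P c, ?_⟩
  have hdisj : (T.neighborSet v \ {p}).PairwiseDisjoint fun c => branch T v c \ {x | x ∈ d c} :=
    ((pairwiseDisjoint_branch hacy v).subset sdiff_subset).mono fun _ => sdiff_subset
  convert IsLeafPathPartition.biUnion (fun c hc => (hdP c hc).2.2) hdisj using 1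
  ext x
  simp only [branch_eq_insert_biUnion hacy p v, mem_sdiff, mem_insert_iff, mem_iUnion₂,
    mem_ofPred_eq, not_or, not_exists]
  constructor
  · rintro ⟨hx | ⟨c, hc, hxc⟩, hxv, hxd⟩
    · exact absurd hx hxv
    refine ⟨c, hc, hxc, fun hxdc => ?_⟩
    by_cases hcK : c ∈ K
    · exact hxd c hcK hxdc
    · simp [(hdP c hc).2.1 hcK] at hxdc
  · rintro ⟨c, hc, hxc, hxdc⟩
    refine ⟨Or.inr ⟨c, hc, hxc⟩, fun hxv => self_notMem_branch hacy hc.1 (hxv ▸ hxc),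
      fun c' hc' hxdc' => ?_⟩
    obtain rfl : c' = c := (pairwiseDisjoint_branch hacy v).elim (hK hc').1 hc.1 <|
      not_disjoint_iff.mpr ⟨x, ((hdP c' (hK hc')).1 hc').2 hxdc', hxc⟩
    exact hxdc hxdc'

lemma HasBranchPartitions.of_mem_leafSet (hacy : T.IsAcyclic) {p v : V} (hv : v ∈ leafSet T)
    (h : ∀ c ∈ T.neighborSet v \ {p}, HasBranchPartitions T v c) : HasBranchPartitions T p v := by
  obtain ⟨d, -, R, hR⟩ := exists_partition_branch_diff hacy (empty_subset _) h
  have hvR : branch T p v \ insert v (⋃ c ∈ (∅ : Set V), {x | x ∈ d c}) =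
      branch T p v \ {x | x ∈ [v]} := by
    simp
  rw [hvR] at hR
  refine ⟨⟨[v], R, isPendantPath_singleton hv, by simp [mem_branch_self], hR⟩,
    Insert.insert [v] R, ?_⟩
  convert hR.insert (isLeafPath_singleton hv) (by simp) using 1
  exact (union_sdiff_cancel (by simp [mem_branch_self])).symm

lemma HasBranchPartitions.of_children (hacy : T.IsAcyclic) {p v c₁ c₂ : V}
    (hv : v ∉ leafSet T) (hc₁ : c₁ ∈ T.neighborSet v \ {p}) (hc₂ : c₂ ∈ T.neighborSet v \ {p})
    (hne : c₁ ≠ c₂) (h : ∀ c ∈ T.neighborSet v \ {p}, HasBranchPartitions T v c) :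
    HasBranchPartitions T p v := by
  constructor
  · obtain ⟨d, hd, R, hR⟩ := exists_partition_branch_diff hacy (singleton_subset_iff.mpr hc₁) h
    obtain ⟨hd₁, hd₁sub⟩ := hd c₁ rfl
    refine ⟨v :: d c₁, R, hd₁.cons hc₁.1 (fun h => self_notMem_branch hacy hc₁.1 (hd₁sub h)) hv,
      ?_, ?_⟩
    · intro x hx
      rcases List.mem_cons.mp hx with rfl | hx
      exacts [mem_branch_self p x, branch_subset_branch hacy hc₁ (hd₁sub hx)]
    · convert hR using 2
      ext x
      simp
  · obtain ⟨d, hd, R, hR⟩ := exists_partition_branch_diff hacy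
      (insert_subset hc₁ (singleton_subset_iff.mpr hc₂)) h
    obtain ⟨hd₁, hd₁sub⟩ := hd c₁ (mem_insert _ _)
    obtain ⟨hd₂, hd₂sub⟩ := hd c₂ (mem_insert_of_mem _ rfl)
    have hdisj : Disjoint (branch T v c₁) (branch T v c₂) :=
      pairwiseDisjoint_branch hacy v hc₁.1 hc₂.1 hne
    have hm : IsLeafPath T ((d c₁).reverse ++ v :: d c₂) := by
      refine hd₁.reverse_append (hd₂.cons hc₂.1
        (fun h => self_notMem_branch hacy hc₂.1 (hd₂sub h)) hv) (hc₁.1 : T.Adj v c₁).symm ?_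
      intro x hx₁ hx₂
      rcases List.mem_cons.mp hx₂ with rfl | hx₂
      · exact self_notMem_branch hacy hc₁.1 (hd₁sub hx₁)
      · exact disjoint_left.mp hdisj (hd₁sub hx₁) (hd₂sub hx₂)
    have hmset : {x | x ∈ (d c₁).reverse ++ v :: d c₂} =
        insert v (⋃ c ∈ ({c₁, c₂} : Set V), {x | x ∈ d c}) := by
      ext x
      rw [biUnion_insert, biUnion_singleton]
      simp only [mem_insert_iff, mem_union, mem_ofPred_eq, List.mem_append, List.mem_reverse,
        List.mem_cons]
      tauto
    refine ⟨Insert.insert ((d c₁).reverse ++ v :: d c₂) R, ?_⟩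
    convert hR.insert hm (fun x hx hx' => hx'.2 (hmset ▸ hx)) using 1
    rw [hmset, union_sdiff_cancel]
    refine insert_subset (mem_branch_self p v) (iUnion₂_subset fun c hc => ?_)
    exact ((hd c hc).2).trans (branch_subset_branch hacy (insert_subset hc₁
      (singleton_subset_iff.mpr hc₂) hc))

lemma exists_pair_mem_diff_singleton {α : Type*} {s : Set α} (hs : 2 < s.ncard) (p : α) :
    ∃ a ∈ s \ {p}, ∃ b ∈ s \ {p}, a ≠ b := by
  obtain ⟨a, b, c, ha, hb, hc, hab, hac, hbc⟩ :=
    (two_lt_ncard_iff (finite_of_ncard_pos (by omega))).mp hs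
  by_cases hap : a = p
  · subst hap
    exact ⟨b, ⟨hb, hab.symm⟩, c, ⟨hc, hac.symm⟩, hbc⟩
  by_cases hbp : b = p
  · subst hbp
    exact ⟨a, ⟨ha, hap⟩, c, ⟨hc, hbc.symm⟩, hac⟩
  · exact ⟨a, ⟨ha, hap⟩, b, ⟨hb, hbp⟩, hab⟩

theorem hasBranchPartitions [Finite V] (hacy : T.IsAcyclic)
    (hdeg : ∀ v, v ∉ leafSet T → 2 < (T.neighborSet v).ncard) (p v : V) :
    HasBranchPartitions T p v := by
  induction hn : (branch T p v).ncard using Nat.strong_induction_on generalizing p v with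
  | _ n ih =>
  have hchildren : ∀ c ∈ T.neighborSet v \ {p}, HasBranchPartitions T v c :=
    fun c hc => ih _ (hn ▸ ncard_branch_lt hacy hc) v c rfl
  by_cases hv : v ∈ leafSet T
  · exact .of_mem_leafSet hacy hv hchildren
  · obtain ⟨c₁, hc₁, c₂, hc₂, hne⟩ := exists_pair_mem_diff_singleton (hdeg v hv) p
    exact .of_children hacy hv hc₁ hc₂ hne hchildren

end

/-- Every unrooted phylogenetic tree admits a leaf induced
path partition: if `T` is a tree (connected and acyclic) with at least two
vertices, no vertex of degree 2, and leaf set `L(T)`, then the vertex set of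
`T` can be partitioned into vertex-disjoint paths of `T` such that every
single-vertex path of the collection is contained in `L(T)` and every other
path intersects `L(T)` precisely in its two end vertices. -/
theorem phylogeneticTree_leafIPP
    {V : Type*} [Fintype V] (T : SimpleGraph V)
    (hcard : 1 < Fintype.card V)
    (hconn : T.Connected) (hacy : T.IsAcyclic)
    (hnodeg2 : ∀ v : V, (T.neighborSet v).ncard ≠ 2) :
    ∃ P : Set (List V),
      (∀ p ∈ P, UPath T p) ∧
      (∀ v : V, ∃! p, p ∈ P ∧ v ∈ p) ∧
      ∀ p ∈ P,
        (∀ a : V, p = [a] → a ∈ leafSet T) ∧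
        (2 ≤ p.length → MeetsLeavesExactlyAtEnds T p) := by
  have : Nontrivial V := Fintype.one_lt_card_iff_nontrivial.mp hcard
  have hdeg : ∀ v, v ∉ leafSet T → 2 < (T.neighborSet v).ncard := by
    intro v hv
    have hne : (T.neighborSet v).Nonempty := by
      simpa [SimpleGraph.IsIsolated] using hconn.preconnected.not_isIsolated v
    have hpos : 0 < (T.neighborSet v).ncard := (Set.ncard_pos).mpr hne
    have hne1 : (T.neighborSet v).ncard ≠ 1 := hv
    have hne2 := hnodeg2 v
    omega
  obtain ⟨v⟩ : Nonempty V := inferInstance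
  obtain ⟨-, P, hP⟩ := hasBranchPartitions hacy hdeg v v
  rw [branch_self hconn] at hP
  exact ⟨P, fun p hp => (hP.isLeafPath p hp).1, fun x => hP.existsUnique (Set.mem_univ x),
    fun p hp => (hP.isLeafPath p hp).2⟩

end Paper
end

section
/- Every tree-based unrooted phylogenetic network N has a path partition whose paths all end in L(N): if N contains a spanning tree with leaf set L(N), then the vertex set of N can be partitioned into vertex-disjoint paths of N such that each path has at least one endpoint in L(N) and distinct paths end at distinct leaves. -/
/-!
Unrooted phylogenetic networks: simple, connected, undirected graphs with
nonempty leaf set and no degree-2 vertices, formalized via `SimpleGraph`.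
-/

namespace Paper

variable {V : Type*}

/-!
Hang the spanning tree `T` from a leaf `r` of `N` and let every vertex point to one of its
children, i.e. a neighbour one step farther from `r`. Since in a tree every vertex other than `r`
has a unique neighbour closer to `r`, this partial map is injective, and it strictly increases
the distance from `r`; so its maximal chains are vertex-disjoint paths of `T` covering all
vertices. Each chain ends at a vertex without children, which is a leaf of `T` (for `r` itself
by the choice of `r`), hence a leaf of `N`; distinct chains end at distinct vertices.
-/

open Relation

section Chains

variable {α : Type*}

def chainFrom (next : α → Option α) (m : α → ℕ)
    (hm : ∀ a b, next a = some b → m b < m a) (a : α) : List α :=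
  match h : next a with
  | none => [a]
  | some b =>
    have : m b < m a := hm a b h
    a :: chainFrom next m hm b
termination_by m a

variable {next : α → Option α} {m : α → ℕ}

theorem le_of_reflTransGen (hm : ∀ a b, next a = some b → m b < m a) {a b : α}
    (h : ReflTransGen (fun x y => next x = some y) a b) : m b ≤ m a := by
  induction h with
  | refl => rfl
  | tail _ hbc ih => exact (hm _ _ hbc).le.trans ih

variable {hm : ∀ a b, next a = some b → m b < m a}

theorem head?_chainFrom (a : α) : (chainFrom next m hm a).head? = some a := by
  rw [chainFrom]; split <;> rfl

theorem mem_chainFrom_iff {a b : α} :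
    b ∈ chainFrom next m hm a ↔ ReflTransGen (fun x y => next x = some y) a b := by
  fun_induction chainFrom next m hm a with
  | case1 a h => rw [ReflTransGen.cases_head_iff]; simp [h, eq_comm]
  | case2 a c h _ ih => rw [ReflTransGen.cases_head_iff]; simp [h, ih, eq_comm]

theorem isChain_chainFrom (a : α) :
    (chainFrom next m hm a).IsChain (fun x y => next x = some y) := by
  fun_induction chainFrom next m hm a with
  | case1 a h => exact List.isChain_singleton a
  | case2 a c h _ ih => simpa [List.isChain_cons, head?_chainFrom, h] using ih

theorem nodup_chainFrom (a : α) : (chainFrom next m hm a).Nodup := by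
  fun_induction chainFrom next m hm a with
  | case1 a h => exact List.nodup_singleton a
  | case2 a c _ hlt ih =>
    refine List.nodup_cons.2 ⟨fun ha => ?_, ih⟩
    have := le_of_reflTransGen hm (mem_chainFrom_iff.1 ha)
    omega

theorem exists_getLast?_chainFrom_eq (a : α) :
    ∃ z, (chainFrom next m hm a).getLast? = some z ∧ next z = none := by
  fun_induction chainFrom next m hm a with
  | case1 a h => exact ⟨a, rfl, h⟩
  | case2 a c h _ ih =>
    obtain ⟨z, hz, hnext⟩ := ih
    exact ⟨z, by simp [List.getLast?_cons, hz], hnext⟩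

theorem exists_source_mem_chainFrom [Finite α] (b : α) :
    ∃ s, (∀ x, next x ≠ some s) ∧ b ∈ chainFrom next m hm s := by
  obtain ⟨s, hs, hmax⟩ := Set.exists_max_image
    {x | ReflTransGen (fun x y => next x = some y) x b} m (Set.toFinite _)
    ⟨b, ReflTransGen.refl⟩
  refine ⟨s, fun x hx => ?_, mem_chainFrom_iff.2 hs⟩
  have := hmax x (ReflTransGen.head hx hs)
  have := hm x s hx
  omega

theorem eq_of_mem_chainFrom_of_mem_chainFrom
    (hinj : ∀ a a' b, next a = some b → next a' = some b → a = a') {s s' b : α}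
    (hs : ∀ x, next x ≠ some s) (hs' : ∀ x, next x ≠ some s')
    (hb : b ∈ chainFrom next m hm s) (hb' : b ∈ chainFrom next m hm s') : s = s' := by
  -- walking backwards from `b` is deterministic, and a source has no way further back
  have eq_of_source {t u : α} (ht : ∀ x, next x ≠ some t)
      (h : ReflTransGen (Function.swap fun x y => next x = some y) t u) : u = t := by
    rcases h.cases_head with rfl | ⟨c, hc, -⟩
    · rfl
    · exact absurd hc (ht c)
  rw [mem_chainFrom_iff, ← reflTransGen_swap] at hb hb'
  rcases ReflTransGen.total_of_right_unique (r := Function.swap fun x y => next x = some y)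
    (fun _ _ _ h h' => hinj _ _ _ h h') hb hb' with h | h
  · exact (eq_of_source hs h).symm
  · exact eq_of_source hs' h

theorem existsUnique_mem_chainFrom_image [Finite α]
    (hinj : ∀ a a' b, next a = some b → next a' = some b → a = a') (b : α) :
    ∃! p, p ∈ chainFrom next m hm '' {s | ∀ x, next x ≠ some s} ∧ b ∈ p := by
  obtain ⟨s, hs, hb⟩ := exists_source_mem_chainFrom b
  refine ⟨_, ⟨⟨s, hs, rfl⟩, hb⟩, ?_⟩
  rintro _ ⟨⟨s', hs', rfl⟩, hb'⟩
  rw [eq_of_mem_chainFrom_of_mem_chainFrom hinj hs' hs hb' hb]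

end Chains

section Trees

theorem UPath.mono {G H : SimpleGraph V} (hle : G ≤ H) {p : List V} (hp : UPath G p) :
    UPath H p :=
  ⟨hp.1, hp.2.1, hp.2.2.imp fun _ _ h => hle h⟩

theorem _root_.SimpleGraph.Connected.dist_lt_card [Fintype V] {T : SimpleGraph V}
    (hT : T.Connected) (u v : V) : T.dist u v < Fintype.card V := by
  obtain ⟨p, hp, hlen⟩ := hT.exists_path_of_dist u v
  exact hlen ▸ hp.length_lt

theorem _root_.SimpleGraph.IsTree.eq_of_adj_of_dist_add_one_eq {T : SimpleGraph V}
    (hT : T.IsTree) {r a b v : V} (ha : T.Adj a v) (hb : T.Adj b v)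
    (hda : T.dist r a + 1 = T.dist r v) (hdb : T.dist r b + 1 = T.dist r v) : a = b := by
  classical
  obtain ⟨p, hp, -⟩ := hT.connected.exists_path_of_dist r v
  -- each such neighbour lies on the path from `r` to `v`, hence is its penultimate vertex
  have eq_penultimate {a : V} (ha : T.Adj a v) (hda : T.dist r a + 1 = T.dist r v) :
      a = p.penultimate := by
    obtain ⟨q, hq, hlen⟩ := hT.connected.exists_path_of_dist r a
    have hv : v ∉ q.support := fun hv => by
      have := T.dist_le (q.takeUntil v hv)
      have := q.length_takeUntil_le_length hv
      omega
    exact hT.isAcyclic.eq_penultimate_of_adj_end hp ha.symm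
      (hT.isAcyclic.mem_support_of_ne_mem_support_of_adj_of_isPath hp hq ha.symm hv)
  rw [eq_penultimate ha hda, eq_penultimate hb hdb]

open Classical in
noncomputable def someChild (T : SimpleGraph V) (r v : V) : Option V :=
  if h : ∃ c, T.Adj v c ∧ T.dist r c = T.dist r v + 1 then some h.choose else none

variable {T : SimpleGraph V} {r : V}

theorem adj_and_dist_of_someChild_eq_some {v c : V} (h : someChild T r v = some c) :
    T.Adj v c ∧ T.dist r c = T.dist r v + 1 := by
  unfold someChild at h
  split_ifs at h with hc
  exact Option.some_injective _ h ▸ hc.choose_spec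

theorem dist_ne_of_someChild_eq_none {v c : V} (h : someChild T r v = none) (hc : T.Adj v c) :
    T.dist r c ≠ T.dist r v + 1 := by
  unfold someChild at h
  split_ifs at h with hc'
  exact fun hd => hc' ⟨c, hc, hd⟩

theorem mem_leafSet_of_someChild_eq_none (hT : T.IsTree) (hr : r ∈ leafSet T) {v : V}
    (h : someChild T r v = none) : v ∈ leafSet T := by
  obtain rfl | hvr := eq_or_ne v r
  · exact hr
  obtain ⟨a, ha⟩ := (hT.connected v r).nonempty_neighborSet_left hvr
  have hparent {z : V} (hz : T.Adj v z) : T.dist r z + 1 = T.dist r v := by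
    have := dist_ne_of_someChild_eq_none h hz
    have := hT.dist_eq_dist_add_one_of_adj r hz
    omega
  refine Set.ncard_eq_one.2 ⟨a, Set.eq_singleton_iff_unique_mem.2 ⟨ha, fun z hz => ?_⟩⟩
  exact hT.eq_of_adj_of_dist_add_one_eq (T.adj_symm hz) (T.adj_symm ha) (hparent hz) (hparent ha)

end Trees

def IsLeafEndingPathPartition (G : SimpleGraph V) (P : Set (List V)) (f : List V → V) : Prop :=
  (∀ p ∈ P, UPath G p) ∧
    (∀ v : V, ∃! p, p ∈ P ∧ v ∈ p) ∧
    (∀ p ∈ P, f p ∈ leafSet G ∧ (p.head? = some (f p) ∨ p.getLast? = some (f p))) ∧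
    ∀ p ∈ P, ∀ q ∈ P, f p = f q → p = q

theorem IsLeafEndingPathPartition.mono {G H : SimpleGraph V} {P : Set (List V)} {f : List V → V}
    (h : IsLeafEndingPathPartition G P f) (hle : G ≤ H) (hleaf : leafSet G = leafSet H) :
    IsLeafEndingPathPartition H P f :=
  ⟨fun p hp => (h.1 p hp).mono hle, h.2.1, hleaf ▸ h.2.2.1, h.2.2.2⟩

theorem _root_.SimpleGraph.IsTree.exists_isLeafEndingPathPartition [Fintype V]
    {T : SimpleGraph V} (hT : T.IsTree) {r : V} (hr : r ∈ leafSet T) :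
    ∃ P f, IsLeafEndingPathPartition T P f := by
  have hdepth (v c : V) (h : someChild T r v = some c) :
      Fintype.card V - T.dist r c < Fintype.card V - T.dist r v := by
    have := hT.connected.dist_lt_card r c
    have := (adj_and_dist_of_someChild_eq_some h).2
    omega
  have hinj (a a' c : V) (ha : someChild T r a = some c) (ha' : someChild T r a' = some c) :
      a = a' := by
    obtain ⟨hac, hdc⟩ := adj_and_dist_of_someChild_eq_some ha
    obtain ⟨hac', hdc'⟩ := adj_and_dist_of_someChild_eq_some ha'
    exact hT.eq_of_adj_of_dist_add_one_eq hac hac' hdc.symm hdc'.symm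
  set chain := chainFrom (someChild T r) (fun v => Fintype.card V - T.dist r v) hdepth
  have chain_getLast (s : V) : (chain s).getLast? = some ((chain s).getLastD r) ∧
      (chain s).getLastD r ∈ leafSet T := by
    obtain ⟨z, hz, hnone⟩ := exists_getLast?_chainFrom_eq (hm := hdepth) s
    rw [List.getLastD_eq_getLast?, hz]
    exact ⟨rfl, mem_leafSet_of_someChild_eq_none hT hr hnone⟩
  refine ⟨chain '' {s | ∀ x, someChild T r x ≠ some s}, fun p => p.getLastD r,
    ?_, ?_, ?_, ?_⟩
  · rintro _ ⟨s, -, rfl⟩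
    exact ⟨List.ne_nil_of_mem (mem_chainFrom_iff.2 ReflTransGen.refl), nodup_chainFrom s,
      (isChain_chainFrom (hm := hdepth) s).imp fun _ _ h =>
        (adj_and_dist_of_someChild_eq_some h).1⟩
  · exact existsUnique_mem_chainFrom_image hinj
  · rintro _ ⟨s, -, rfl⟩
    exact ⟨(chain_getLast s).2, Or.inr (chain_getLast s).1⟩
  · rintro _ ⟨s, hs, rfl⟩ _ ⟨s', hs', rfl⟩ hlast
    have hmem := List.mem_of_getLast? (chain_getLast s).1
    rw [show (chain s).getLastD r = (chain s').getLastD r from hlast] at hmem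
    rw [eq_of_mem_chainFrom_of_mem_chainFrom hinj hs hs' hmem
      (List.mem_of_getLast? (chain_getLast s').1)]

/-- Every tree-based unrooted phylogenetic network `N` has a
path partition whose paths all end in `L(N)`: if `N` contains a spanning tree
with leaf set `L(N)`, then the vertex set of `N` can be partitioned into
vertex-disjoint paths of `N` such that each path has at least one endpoint in
`L(N)` and distinct paths end at distinct leaves. -/
theorem treeBased_pathPartition_ending_in_leaves
    {V : Type*} [Fintype V] (G : SimpleGraph V)
    (hUPN : IsUPN G) (hTB : TreeBasedU G) :
    ∃ (P : Set (List V)) (f : List V → V),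
      (∀ p ∈ P, UPath G p) ∧
      (∀ v : V, ∃! p, p ∈ P ∧ v ∈ p) ∧
      (∀ p ∈ P, f p ∈ leafSet G ∧
        (p.head? = some (f p) ∨ p.getLast? = some (f p))) ∧
      ∀ p ∈ P, ∀ q ∈ P, f p = f q → p = q := by
  obtain ⟨T, hle, hconn, hacyc, hleaf⟩ := hTB
  obtain ⟨r, hr⟩ := hUPN.2.1
  have hleaf : leafSet T = leafSet G := hleaf
  obtain ⟨P, f, hP⟩ := SimpleGraph.IsTree.exists_isLeafEndingPathPartition ⟨hconn, hacyc⟩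
    (hleaf ▸ hr)
  exact ⟨P, f, hP.mono hle hleaf⟩

end Paper
end
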